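/- arXiv:1011.5517 — 7 statements merged into one kernel-verified Lean document; each statement's English description precedes it below -/
import Mathlib

section
/- Let H be a real Hilbert space, let A : H → 2^H be maximally monotone, let β > 0, and let B : H → H be a monotone, β-Lipschitz operator with zer(A+B) ≠ ∅. Let (a_n), (b_n), (c_n) be sequences in H with Σ_n ‖a_n‖ < ∞, Σ_n ‖b_n‖ < ∞, Σ_n ‖c_n‖ < ∞, let x_0 ∈ H, let ε ∈ (0, 1/(β+1)), let (γ_n) be a sequence in [ε, (1−ε)/β], and define for every n: y_n = x_n − γ_n(B x_n + a_n); p_n = J_{γ_n A} y_n + b_n; q_n = p_n − γ_n(B p_n + c_n); x_{n+1} = x_n − y_n + q_n. Then Σ_n ‖x_n − p_n‖² < ∞ and Σ_n ‖y_n − q_n‖² < ∞. -/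
open scoped InnerProductSpace
open Filter Topology

def MonotoneSV {H : Type*} [NormedAddCommGroup H] [InnerProductSpace ℝ H]
    (A : H → Set H) : Prop :=
  ∀ x y u v : H, u ∈ A x → v ∈ A y → 0 ≤ ⟪x - y, u - v⟫_ℝ

def MaxMonotone {H : Type*} [NormedAddCommGroup H] [InnerProductSpace ℝ H]
    (A : H → Set H) : Prop :=
  MonotoneSV A ∧ ∀ x u : H, (∀ y v : H, v ∈ A y → (0:ℝ) ≤ ⟪x - y, u - v⟫_ℝ) → u ∈ A x

def IsResolvent {E : Type*} [AddCommGroup E] [Module ℝ E]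
    (γ : ℝ) (A : E → Set E) (J : E → E) : Prop :=
  ∀ w, ∃ u ∈ A (J w), w = J w + γ • u

section helpers
variable {H : Type*} [NormedAddCommGroup H] [InnerProductSpace ℝ H]

lemma resolvent_nonexp {A : H → Set H} (hA : MonotoneSV A) {γ : ℝ} (hγ : 0 < γ)
    {J : H → H} (hJ : IsResolvent γ A J) (y₁ y₂ : H) : ‖J y₁ - J y₂‖ ≤ ‖y₁ - y₂‖ := by
  obtain ⟨u₁, hu₁, h₁⟩ := hJ y₁
  obtain ⟨u₂, hu₂, h₂⟩ := hJ y₂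
  have hm := hA _ _ _ _ hu₁ hu₂
  have hd : y₁ - y₂ = (J y₁ - J y₂) + γ • (u₁ - u₂) := by
    rw [smul_sub]; nth_rw 1 [h₁]; nth_rw 1 [h₂]; abel
  have hsq : ‖y₁ - y₂‖ ^ 2 = ‖J y₁ - J y₂‖ ^ 2 + 2 * ⟪J y₁ - J y₂, γ • (u₁ - u₂)⟫_ℝ
      + ‖γ • (u₁ - u₂)‖ ^ 2 := by
    rw [hd]; exact norm_add_sq_real _ _
  rw [real_inner_smul_right] at hsq
  nlinarith [norm_nonneg (y₁ - y₂), norm_nonneg (J y₁ - J y₂), sq_nonneg ‖γ • (u₁ - u₂)‖]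

lemma resolvent_fixed {A : H → Set H} (hA : MonotoneSV A) {γ : ℝ} (hγ : 0 < γ)
    {J : H → H} (hJ : IsResolvent γ A J) {w u : H} (hu : u ∈ A w) :
    J (w + γ • u) = w := by
  obtain ⟨u', hu', h⟩ := hJ (w + γ • u)
  have hm := hA _ _ _ _ hu' hu
  have hd : J (w + γ • u) - w = γ • (u - u') := by
    have h' : J (w + γ • u) = w + γ • u - γ • u' := by rw [eq_sub_iff_add_eq]; exact h.symm
    rw [h', smul_sub]; abel
  rw [hd, real_inner_smul_left] at hm
  have h2 : ⟪u - u', u' - u⟫_ℝ = -‖u - u'‖^2 := by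
    rw [show u' - u = -(u - u') by abel, inner_neg_right, real_inner_self_eq_norm_sq]
  rw [h2] at hm
  have h3 : ‖u - u'‖ ^ 2 = 0 := le_antisymm (by nlinarith) (sq_nonneg _)
  have huu : u' = u := by
    have := sub_eq_zero.mp (norm_eq_zero.mp (by simpa using sq_eq_zero_iff.mp h3))
    exact this.symm
  rw [huu] at h
  exact (add_right_cancel h.symm)

lemma key_id (s u v a' : H) (γ : ℝ) :
    ‖s - u + γ • v‖ ^ 2 = ‖s‖ ^ 2 - ‖u‖ ^ 2
      - 2 * ⟪s - u, u - γ • v - γ • a'⟫_ℝ - 2 * γ * ⟪s - u, a'⟫_ℝ + γ ^ 2 * ‖v‖ ^ 2 := by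
  simp only [← real_inner_self_eq_norm_sq, inner_sub_left, inner_sub_right, inner_add_left,
    inner_add_right, real_inner_smul_left, real_inner_smul_right]
  ring_nf
  rw [real_inner_comm u s, real_inner_comm v s, real_inner_comm v u]
  ring

lemma le_of_sq_le_sq'' {a b : ℝ} (ha : 0 ≤ a) (hb : 0 ≤ b) (h : a^2 ≤ b^2) : a ≤ b := by
  nlinarith [sq_nonneg (a - b), sq_nonneg (a + b)]

end helpers

set_option maxHeartbeats 2000000 in
theorem stmt_0 {H : Type*} [NormedAddCommGroup H] [InnerProductSpace ℝ H] [CompleteSpace H]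
    (A : H → Set H) (hA : MaxMonotone A)
    (β : ℝ) (hβ : 0 < β)
    (B : H → H)
    (hBmono : ∀ x y : H, 0 ≤ ⟪x - y, B x - B y⟫_ℝ)
    (hBlip : ∀ x y : H, ‖B x - B y‖ ≤ β * ‖x - y‖)
    (hzer : ∃ w : H, -B w ∈ A w)
    (a b c : ℕ → H)
    (ha : Summable fun n => ‖a n‖) (hb : Summable fun n => ‖b n‖)
    (hc : Summable fun n => ‖c n‖)
    (ε : ℝ) (hε : ε ∈ Set.Ioo (0:ℝ) (1 / (β + 1)))
    (γ : ℕ → ℝ) (hγ : ∀ n, γ n ∈ Set.Icc ε ((1 - ε) / β))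
    (J : ℕ → H → H) (hJ : ∀ n, IsResolvent (γ n) A (J n))
    (x y p q : ℕ → H)
    (hy : ∀ n, y n = x n - γ n • (B (x n) + a n))
    (hp : ∀ n, p n = J n (y n) + b n)
    (hq : ∀ n, q n = p n - γ n • (B (p n) + c n))
    (hx : ∀ n, x (n + 1) = x n - y n + q n) :
    (Summable fun n => ‖x n - p n‖ ^ 2) ∧ (Summable fun n => ‖y n - q n‖ ^ 2) := by
  obtain ⟨w, hw⟩ := hzer
  obtain ⟨hε0, hε1⟩ := hε
  have hβ1 : (0:ℝ) < β + 1 := by linarith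
  have hε1' : ε < 1 := lt_of_lt_of_le hε1 (by rw [div_le_one hβ1]; linarith)
  set Γ : ℝ := 1/β with hΓdef
  have hΓpos : 0 < Γ := by positivity
  have hΓβ : Γ * β = 1 := one_div_mul_cancel hβ.ne'
  have hγpos : ∀ n, 0 < γ n := fun n => lt_of_lt_of_le hε0 (hγ n).1
  have hγβ : ∀ n, γ n * β ≤ 1 - ε := fun n => (le_div_iff₀ hβ).mp (hγ n).2
  have hγΓ : ∀ n, γ n ≤ Γ := by
    intro n
    have := hγβ n
    rw [hΓdef, le_div_iff₀ hβ]
    nlinarith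
  -- the exact resolvent point
  obtain ⟨P, hPdef⟩ : ∃ P : ℕ → H, ∀ n, P n = J n (y n) := ⟨_, fun n => rfl⟩
  have hpP : ∀ n, p n = P n + b n := by intro n; rw [hp n, hPdef n]
  -- the exact Tseng update
  obtain ⟨z, hzdef⟩ : ∃ z : ℕ → H, ∀ n, z n = P n + γ n • (B (x n) - B (P n)) :=
    ⟨_, fun n => rfl⟩
  -- key monotonicity inequality
  have hkey : ∀ n, 0 ≤ ⟪P n - w, y n - P n + γ n • B (P n)⟫_ℝ := by
    intro n
    obtain ⟨u, hu, hEq⟩ := hJ n (y n)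
    rw [← hPdef n] at hu hEq
    have h1 := hA.1 _ _ _ _ hu hw
    have h2 := hBmono (P n) w
    have hyP : y n - P n = γ n • u := by rw [hEq]; abel
    have e1 : ⟪P n - w, y n - P n + γ n • B (P n)⟫_ℝ
        = γ n * ⟪P n - w, u - -B w⟫_ℝ + γ n * ⟪P n - w, B (P n) - B w⟫_ℝ := by
      rw [hyP]
      simp only [inner_add_right, inner_sub_right, real_inner_smul_right, inner_neg_right]
      ring
    rw [e1]
    have hγn := (hγpos n).le
    exact add_nonneg (mul_nonneg hγn h1) (mul_nonneg hγn h2)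
  -- main quadratic inequality
  have hZ : ∀ n, ‖z n - w‖^2 ≤ ‖x n - w‖^2 - (1 - (1-ε)^2) * ‖x n - P n‖^2
      + 2*Γ*(‖a n‖*‖P n - w‖) := by
    intro n
    have hid := key_id (x n - w) (x n - P n) (B (x n) - B (P n)) (a n) (γ n)
    have hzw : (x n - w) - (x n - P n) + γ n • (B (x n) - B (P n)) = z n - w := by
      rw [hzdef n]; abel
    have hsu : x n - w - (x n - P n) = P n - w := by abel
    have harg : (x n - P n) - γ n • (B (x n) - B (P n)) - γ n • (a n)
        = y n - P n + γ n • B (P n) := by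
      rw [hy n, smul_add, smul_sub]; abel
    rw [hzw, harg, hsu] at hid
    have h1 := hkey n
    have h2 := abs_real_inner_le_norm (P n - w) (a n)
    have h3 := hBlip (x n) (P n)
    have h4 : γ n * ‖B (x n) - B (P n)‖ ≤ (1-ε) * ‖x n - P n‖ := by
      have := mul_le_mul_of_nonneg_left h3 (hγpos n).le
      nlinarith [norm_nonneg (x n - P n), hγβ n]
    have h5 : (γ n)^2 * ‖B (x n) - B (P n)‖^2 ≤ (1-ε)^2 * ‖x n - P n‖^2 := by
      nlinarith [mul_nonneg (hγpos n).le (norm_nonneg (B (x n) - B (P n))), h4]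
    have h6 : -(2 * γ n * ⟪P n - w, a n⟫_ℝ) ≤ 2*Γ*(‖a n‖*‖P n - w‖) := by
      have h2' : -⟪P n - w, a n⟫_ℝ ≤ ‖P n - w‖ * ‖a n‖ := by
        have := (abs_le.mp h2).1; linarith
      nlinarith [mul_nonneg (norm_nonneg (P n - w)) (norm_nonneg (a n)), hγΓ n, hγpos n,
        hΓpos, mul_le_mul_of_nonneg_left h2' (hγpos n).le]
    nlinarith [hid, h1, h5, h6]
  -- bound on ‖P n - w‖
  have hPw : ∀ n, ‖P n - w‖ ≤ 2*‖x n - w‖ + Γ*‖a n‖ := by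
    intro n
    have hfix : J n (w + γ n • (-B w)) = w := resolvent_fixed hA.1 (hγpos n) (hJ n) hw
    have hne := resolvent_nonexp hA.1 (hγpos n) (hJ n) (y n) (w + γ n • (-B w))
    rw [hfix, ← hPdef n] at hne
    have harg : y n - (w + γ n • (-B w)) = (x n - w) - γ n • (B (x n) - B w) - γ n • a n := by
      rw [hy n, smul_add, smul_sub, smul_neg]; abel
    rw [harg] at hne
    have ht : ‖(x n - w) - γ n • (B (x n) - B w) - γ n • a n‖
        ≤ ‖x n - w‖ + γ n * ‖B (x n) - B w‖ + γ n * ‖a n‖ := by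
      calc ‖(x n - w) - γ n • (B (x n) - B w) - γ n • a n‖
          ≤ ‖(x n - w) - γ n • (B (x n) - B w)‖ + ‖γ n • a n‖ := norm_sub_le _ _
        _ ≤ ‖x n - w‖ + ‖γ n • (B (x n) - B w)‖ + ‖γ n • a n‖ := by
            have := norm_sub_le (x n - w) (γ n • (B (x n) - B w)); linarith
        _ = ‖x n - w‖ + γ n * ‖B (x n) - B w‖ + γ n * ‖a n‖ := by
            rw [norm_smul, norm_smul, Real.norm_eq_abs, abs_of_pos (hγpos n)]
    have hlip := hBlip (x n) w
    have hγβn := hγβ n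
    have h7 : γ n * ‖B (x n) - B w‖ ≤ ‖x n - w‖ := by
      nlinarith [norm_nonneg (x n - w), mul_le_mul_of_nonneg_left hlip (hγpos n).le]
    have h8 : γ n * ‖a n‖ ≤ Γ * ‖a n‖ :=
      mul_le_mul_of_nonneg_right (hγΓ n) (norm_nonneg _)
    linarith
  -- positive contraction constant
  have hc0 : 0 < 1 - (1-ε)^2 := by nlinarith
  -- ‖z n - w‖ ≤ ‖x n - w‖ + 2Γ‖a n‖
  have hzb : ∀ n, ‖z n - w‖ ≤ ‖x n - w‖ + 2*Γ*‖a n‖ := by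
    intro n
    apply le_of_sq_le_sq'' (norm_nonneg _)
      (by positivity)
    nlinarith [hZ n, hPw n, mul_le_mul_of_nonneg_left (hPw n)
      (by positivity : (0:ℝ) ≤ 2*Γ*‖a n‖), mul_nonneg hc0.le (sq_nonneg ‖x n - P n‖),
      mul_nonneg (mul_nonneg hΓpos.le hΓpos.le) (mul_nonneg (norm_nonneg (a n)) (norm_nonneg (a n)))]
  -- error sequences
  obtain ⟨η, hηdef⟩ : ∃ η : ℕ → ℝ, ∀ n, η n = 2*‖b n‖ + Γ*(‖a n‖ + ‖c n‖) := ⟨_, fun n => rfl⟩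
  obtain ⟨E, hEdef⟩ : ∃ E : ℕ → ℝ, ∀ n, E n = 2*Γ*‖a n‖ + η n := ⟨_, fun n => rfl⟩
  have hηnn : ∀ n, 0 ≤ η n := by
    intro n; rw [hηdef n]; positivity
  have hEnn : ∀ n, 0 ≤ E n := by
    intro n; rw [hEdef n]; have := hηnn n; positivity
  have hη : Summable η := by
    apply Summable.congr (((hb.mul_left 2)).add ((ha.add hc).mul_left Γ))
    intro n; rw [hηdef n]
  have hE : Summable E := by
    apply Summable.congr ((ha.mul_left (2*Γ)).add hη)
    intro n; rw [hEdef n]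
  -- ‖x (n+1) - z n‖ ≤ η n
  have hxz : ∀ n, ‖x (n+1) - z n‖ ≤ η n := by
    intro n
    have hdiff : x (n+1) - z n = b n + γ n • (B (P n) - B (p n)) + γ n • (a n - c n) := by
      rw [hx n, hq n, hy n, hzdef n, hpP n]
      module
    have hPp : ‖P n - p n‖ = ‖b n‖ := by
      rw [hpP n, show P n - (P n + b n) = -(b n) by abel, norm_neg]
    have ht : ‖b n + γ n • (B (P n) - B (p n)) + γ n • (a n - c n)‖
        ≤ ‖b n‖ + γ n * ‖B (P n) - B (p n)‖ + γ n * ‖a n - c n‖ := by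
      calc ‖b n + γ n • (B (P n) - B (p n)) + γ n • (a n - c n)‖
          ≤ ‖b n + γ n • (B (P n) - B (p n))‖ + ‖γ n • (a n - c n)‖ := norm_add_le _ _
        _ ≤ ‖b n‖ + ‖γ n • (B (P n) - B (p n))‖ + ‖γ n • (a n - c n)‖ := by
            linarith [norm_add_le (b n) (γ n • (B (P n) - B (p n)))]
        _ = ‖b n‖ + γ n * ‖B (P n) - B (p n)‖ + γ n * ‖a n - c n‖ := by
            rw [norm_smul, norm_smul, Real.norm_eq_abs, abs_of_pos (hγpos n)]
    have h1 : γ n * ‖B (P n) - B (p n)‖ ≤ ‖b n‖ := by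
      have hl := hBlip (P n) (p n)
      rw [hPp] at hl
      nlinarith [norm_nonneg (b n), mul_le_mul_of_nonneg_left hl (hγpos n).le, hγβ n]
    have h2 : γ n * ‖a n - c n‖ ≤ Γ * (‖a n‖ + ‖c n‖) := by
      have hac := norm_sub_le (a n) (c n)
      nlinarith [norm_nonneg (a n - c n), hγΓ n, hγpos n, hΓpos]
    rw [hdiff, hηdef n]
    linarith
  -- quasi-Fejér step
  have hstep : ∀ n, ‖x (n+1) - w‖ ≤ ‖x n - w‖ + E n := by
    intro n
    have htri : ‖x (n+1) - w‖ ≤ ‖x (n+1) - z n‖ + ‖z n - w‖ := by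
      have heq : x (n+1) - w = (x (n+1) - z n) + (z n - w) := by abel
      rw [heq]; exact norm_add_le _ _
    have := hxz n
    have := hzb n
    rw [hEdef n]
    linarith
  -- uniform bound
  obtain ⟨M, hMdef⟩ : ∃ M : ℝ, M = ‖x 0 - w‖ + ∑' n, E n := ⟨_, rfl⟩
  have htsumE : (0:ℝ) ≤ ∑' n, E n := tsum_nonneg hEnn
  have hM0 : 0 ≤ M := by rw [hMdef]; positivity
  have hdM : ∀ n, ‖x n - w‖ ≤ M := by
    have key : ∀ n, ‖x n - w‖ ≤ ‖x 0 - w‖ + ∑ k ∈ Finset.range n, E k := by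
      intro n
      induction n with
      | zero => simp
      | succ n ih =>
        rw [Finset.sum_range_succ]
        have := hstep n
        linarith
    intro n
    have h2 : ∑ k ∈ Finset.range n, E k ≤ ∑' k, E k :=
      Summable.sum_le_tsum _ (fun i _ => hEnn i) hE
    have := key n
    rw [hMdef]
    linarith
  -- more constants
  obtain ⟨Sa, hSadef⟩ : ∃ Sa : ℝ, Sa = ∑' n, ‖a n‖ := ⟨_, rfl⟩
  have hSa0 : 0 ≤ Sa := by rw [hSadef]; exact tsum_nonneg (fun n => norm_nonneg _)
  have haS : ∀ n, ‖a n‖ ≤ Sa := by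
    intro n; rw [hSadef]; exact Summable.le_tsum ha n (fun j _ => norm_nonneg _)
  obtain ⟨Sη, hSηdef⟩ : ∃ S : ℝ, S = ∑' n, η n := ⟨_, rfl⟩
  have hSη0 : 0 ≤ Sη := by rw [hSηdef]; exact tsum_nonneg hηnn
  have hηS : ∀ n, η n ≤ Sη := by
    intro n; rw [hSηdef]; exact Summable.le_tsum hη n (fun j _ => hηnn j)
  obtain ⟨C1, hC1def⟩ : ∃ C1 : ℝ, C1 = 2*Γ*(2*M + Γ*Sa) := ⟨_, rfl⟩
  obtain ⟨C2, hC2def⟩ : ∃ C2 : ℝ, C2 = 2*(M + 2*Γ*Sa) + Sη := ⟨_, rfl⟩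
  have hC10 : 0 ≤ C1 := by rw [hC1def]; positivity
  have hC20 : 0 ≤ C2 := by rw [hC2def]; positivity
  -- per-step summable bound
  have hGn : ∀ n, (1-(1-ε)^2) * ‖x n - P n‖^2
      ≤ ‖x n - w‖^2 - ‖x (n+1) - w‖^2 + (C1*‖a n‖ + C2*η n) := by
    intro n
    have hz2 := hZ n
    have hPwb : ‖P n - w‖ ≤ 2*M + Γ*Sa := by
      have h1 := hPw n
      have h2 := hdM n
      have h3 := mul_le_mul_of_nonneg_left (haS n) hΓpos.le
      linarith
    have h1 : 2*Γ*(‖a n‖*‖P n - w‖) ≤ C1*‖a n‖ := by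
      have := mul_le_mul_of_nonneg_left hPwb (norm_nonneg (a n))
      rw [hC1def]
      nlinarith [hΓpos]
    have hZle : ‖z n - w‖ ≤ M + 2*Γ*Sa := by
      have h2 := hzb n
      have h3 := hdM n
      have h4 := mul_le_mul_of_nonneg_left (haS n) (by positivity : (0:ℝ) ≤ 2*Γ)
      linarith
    have hd1 : ‖x (n+1) - w‖ ≤ ‖z n - w‖ + η n := by
      have heq : x (n+1) - w = (x (n+1) - z n) + (z n - w) := by abel
      have := hxz n
      calc ‖x (n+1) - w‖ ≤ ‖x (n+1) - z n‖ + ‖z n - w‖ := by rw [heq]; exact norm_add_le _ _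
        _ ≤ ‖z n - w‖ + η n := by linarith
    have h2 : ‖x (n+1) - w‖^2 ≤ ‖z n - w‖^2 + C2 * η n := by
      rw [hC2def]
      nlinarith [mul_self_le_mul_self (norm_nonneg (x (n+1) - w)) hd1,
        mul_le_mul_of_nonneg_right hZle (hηnn n),
        mul_le_mul_of_nonneg_right (hηS n) (hηnn n)]
    linarith
  -- summability of the exact increments
  have hR : Summable (fun n => C1*‖a n‖ + C2*η n) := (ha.mul_left C1).add (hη.mul_left C2)
  have hRnn : ∀ n, 0 ≤ C1*‖a n‖ + C2*η n := by
    intro n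
    have := hηnn n
    positivity
  have hsum1 : Summable (fun n => (1-(1-ε)^2) * ‖x n - P n‖^2) := by
    apply summable_of_sum_range_le
      (c := ‖x 0 - w‖^2 + ∑' n, (C1*‖a n‖ + C2*η n))
      (fun n => mul_nonneg hc0.le (sq_nonneg _))
    intro n
    have htel : ∑ k ∈ Finset.range n, (‖x k - w‖^2 - ‖x (k+1) - w‖^2)
        = ‖x 0 - w‖^2 - ‖x n - w‖^2 := Finset.sum_range_sub' (fun k => ‖x k - w‖^2) n
    have hle : ∑ k ∈ Finset.range n, (1-(1-ε)^2) * ‖x k - P k‖^2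
        ≤ ∑ k ∈ Finset.range n, ((‖x k - w‖^2 - ‖x (k+1) - w‖^2) + (C1*‖a k‖ + C2*η k)) :=
      Finset.sum_le_sum (fun k _ => by linarith [hGn k])
    rw [Finset.sum_add_distrib, htel] at hle
    have h2 : ∑ k ∈ Finset.range n, (C1*‖a k‖ + C2*η k) ≤ ∑' k, (C1*‖a k‖ + C2*η k) :=
      Summable.sum_le_tsum _ (fun i _ => hRnn i) hR
    have h3 : (0:ℝ) ≤ ‖x n - w‖^2 := sq_nonneg _
    linarith
  have hsumf : Summable (fun n => ‖x n - P n‖^2) := by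
    have h := hsum1.mul_left (1-(1-ε)^2)⁻¹
    apply h.congr
    intro n
    rw [← mul_assoc, inv_mul_cancel₀ hc0.ne', one_mul]
  -- summability of ‖b n‖²
  obtain ⟨Sb, hSbdef⟩ : ∃ Sb : ℝ, Sb = ∑' n, ‖b n‖ := ⟨_, rfl⟩
  have hbS : ∀ n, ‖b n‖ ≤ Sb := by
    intro n; rw [hSbdef]; exact Summable.le_tsum hb n (fun j _ => norm_nonneg _)
  have hsb2 : Summable (fun n => ‖b n‖^2) := by
    apply Summable.of_nonneg_of_le (fun n => sq_nonneg _) _ (hb.mul_left Sb)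
    intro n
    nlinarith [norm_nonneg (b n), hbS n]
  -- first goal
  have goal1 : Summable (fun n => ‖x n - p n‖^2) := by
    apply Summable.of_nonneg_of_le (fun n => sq_nonneg _) _
      ((hsumf.mul_left 2).add (hsb2.mul_left 2))
    intro n
    have hxp : ‖x n - p n‖ ≤ ‖x n - P n‖ + ‖b n‖ := by
      have heq : x n - p n = (x n - P n) - b n := by rw [hpP n]; abel
      rw [heq]; exact norm_sub_le _ _
    nlinarith [norm_nonneg (x n - p n), sq_nonneg (‖x n - P n‖ - ‖b n‖),
      mul_self_le_mul_self (norm_nonneg (x n - p n)) hxp]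
  refine ⟨goal1, ?_⟩
  -- second goal
  obtain ⟨Sac, hSacdef⟩ : ∃ S : ℝ, S = ∑' n, (‖a n‖ + ‖c n‖) := ⟨_, rfl⟩
  have hac : Summable (fun n => ‖a n‖ + ‖c n‖) := ha.add hc
  have hacS : ∀ n, ‖a n‖ + ‖c n‖ ≤ Sac := by
    intro n; rw [hSacdef]
    exact Summable.le_tsum hac n (fun j _ => by positivity)
  have hsac2 : Summable (fun n => (‖a n‖ + ‖c n‖)^2) := by
    apply Summable.of_nonneg_of_le (fun n => sq_nonneg _) _ (hac.mul_left Sac)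
    intro n
    nlinarith [norm_nonneg (a n), norm_nonneg (c n), hacS n]
  apply Summable.of_nonneg_of_le (fun n => sq_nonneg _) _
    ((goal1.mul_left 8).add (hsac2.mul_left (2*Γ^2)))
  intro n
  have hdiff : y n - q n
      = (x n - p n) - γ n • (B (x n) - B (p n)) - γ n • a n + γ n • c n := by
    rw [hy n, hq n]
    module
  have hb1 : ‖y n - q n‖ ≤ 2*‖x n - p n‖ + Γ*(‖a n‖ + ‖c n‖) := by
    have ht : ‖(x n - p n) - γ n • (B (x n) - B (p n)) - γ n • a n + γ n • c n‖
        ≤ ‖x n - p n‖ + γ n * ‖B (x n) - B (p n)‖ + γ n * ‖a n‖ + γ n * ‖c n‖ := by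
      calc ‖(x n - p n) - γ n • (B (x n) - B (p n)) - γ n • a n + γ n • c n‖
          ≤ ‖(x n - p n) - γ n • (B (x n) - B (p n)) - γ n • a n‖ + ‖γ n • c n‖ :=
            norm_add_le _ _
        _ ≤ ‖(x n - p n) - γ n • (B (x n) - B (p n))‖ + ‖γ n • a n‖ + ‖γ n • c n‖ := by
            linarith [norm_sub_le ((x n - p n) - γ n • (B (x n) - B (p n))) (γ n • a n)]
        _ ≤ ‖x n - p n‖ + ‖γ n • (B (x n) - B (p n))‖ + ‖γ n • a n‖ + ‖γ n • c n‖ := by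
            linarith [norm_sub_le (x n - p n) (γ n • (B (x n) - B (p n)))]
        _ = ‖x n - p n‖ + γ n * ‖B (x n) - B (p n)‖ + γ n * ‖a n‖ + γ n * ‖c n‖ := by
            rw [norm_smul, norm_smul, norm_smul, Real.norm_eq_abs, abs_of_pos (hγpos n)]
    have h1 : γ n * ‖B (x n) - B (p n)‖ ≤ ‖x n - p n‖ := by
      nlinarith [norm_nonneg (x n - p n),
        mul_le_mul_of_nonneg_left (hBlip (x n) (p n)) (hγpos n).le, hγβ n]
    have h2 : γ n * ‖a n‖ ≤ Γ * ‖a n‖ := mul_le_mul_of_nonneg_right (hγΓ n) (norm_nonneg _)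
    have h3 : γ n * ‖c n‖ ≤ Γ * ‖c n‖ := mul_le_mul_of_nonneg_right (hγΓ n) (norm_nonneg _)
    rw [hdiff]
    calc ‖(x n - p n) - γ n • (B (x n) - B (p n)) - γ n • a n + γ n • c n‖
        ≤ ‖x n - p n‖ + γ n * ‖B (x n) - B (p n)‖ + γ n * ‖a n‖ + γ n * ‖c n‖ := ht
      _ ≤ 2*‖x n - p n‖ + Γ*(‖a n‖ + ‖c n‖) := by linarith
  nlinarith [mul_self_le_mul_self (norm_nonneg (y n - q n)) hb1,
    sq_nonneg (2*‖x n - p n‖ - Γ*(‖a n‖ + ‖c n‖)),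
    norm_nonneg (y n - q n)]
end

section
/- Let H be a real Hilbert space, let A : H → 2^H be maximally monotone, let β > 0, and let B : H → H be a monotone, β-Lipschitz operator with zer(A+B) ≠ ∅. Let (a_n), (b_n), (c_n) be sequences in H with Σ_n ‖a_n‖ < ∞, Σ_n ‖b_n‖ < ∞, Σ_n ‖c_n‖ < ∞, let x_0 ∈ H, let ε ∈ (0, 1/(β+1)), let (γ_n) be a sequence in [ε, (1−ε)/β], and define for every n: y_n = x_n − γ_n(B x_n + a_n); p_n = J_{γ_n A} y_n + b_n; q_n = p_n − γ_n(B p_n + c_n); x_{n+1} = x_n − y_n + q_n. Let x̄ ∈ zer(A+B) be the weak limit of (x_n). If A + B is demiregular at x̄, then x_n → x̄ and p_n → x̄ in norm. -/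
open scoped InnerProductSpace
open Filter Topology

/-- Weak convergence of a sequence in an inner product space. -/
def WeakTendsto {H : Type*} [NormedAddCommGroup H] [InnerProductSpace ℝ H]
    (x : ℕ → H) (l : H) : Prop :=
  ∀ w : H, Filter.Tendsto (fun n => ⟪x n, w⟫_ℝ) Filter.atTop (nhds ⟪l, w⟫_ℝ)

/-- An operator `M` is demiregular at `x`: for every sequence `(xs n, us n)` in the graph of `M`
and every `u ∈ M x` such that `xs n ⇀ x` weakly and `us n → u` strongly, one has `xs n → x`
strongly. -/
def Demiregular {H : Type*} [NormedAddCommGroup H] [InnerProductSpace ℝ H]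
    (M : H → Set H) (x : H) : Prop :=
  ∀ (xs us : ℕ → H) (u : H), (∀ n, us n ∈ M (xs n)) → u ∈ M x →
    WeakTendsto xs x → Filter.Tendsto us Filter.atTop (nhds u) →
    Filter.Tendsto xs Filter.atTop (nhds x)

/-!
Let `T` be Tseng's exact forward-backward-forward map. For every zero `w` of `A + B`,
`‖T v - w‖² ≤ ‖v - w‖² - (1 - γ²β²) ‖v - J (v - γ B v)‖²`, and one perturbed step lands within a
multiple of `‖aₙ‖ + ‖bₙ‖ + ‖cₙ‖` of `T xₙ`, a summable error. So `(xₙ)` is quasi-Fejér monotone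
and `xₙ - J (yₙ)` is square summable, hence tends to `0`. Thus `J (yₙ) ⇀ x̄`, and `(A + B) (J (yₙ))`
contains elements tending to `0`; demiregularity makes the convergence of `J (yₙ)` strong, and
`xₙ`, `pₙ` are asymptotically close to `J (yₙ)`.
-/

theorem le_add_tsum_of_le_add {r e : ℕ → ℝ} (he : ∀ n, 0 ≤ e n) (hsum : Summable e)
    (hstep : ∀ n, r (n + 1) ≤ r n + e n) (n : ℕ) : r n ≤ r 0 + ∑' k, e k := by
  have hpartial : r n ≤ r 0 + ∑ k ∈ Finset.range n, e k := by
    induction n with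
    | zero => simp
    | succ n ih => rw [Finset.sum_range_succ]; linarith [hstep n]
  linarith [hsum.sum_le_tsum (Finset.range n) fun k _ => he k]

theorem summable_of_quasiFejer {r t s e : ℕ → ℝ} {δ : ℝ} (hδ : 0 < δ) (hr : ∀ n, 0 ≤ r n)
    (ht : ∀ n, 0 ≤ t n) (hs : ∀ n, 0 ≤ s n) (he : ∀ n, 0 ≤ e n) (hsum : Summable e)
    (hstep : ∀ n, r (n + 1) ≤ t n + e n) (hdesc : ∀ n, t n ^ 2 + δ * s n ≤ r n ^ 2) :
    Summable s := by
  set S := ∑' k, e k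
  have hS : ∀ n, e n ≤ S := fun n => hsum.le_tsum n fun k _ => he k
  have htr : ∀ n, t n ≤ r n := fun n =>
    (pow_le_pow_iff_left₀ (ht n) (hr n) two_ne_zero).mp
      (by nlinarith [hdesc n, mul_nonneg hδ.le (hs n)])
  have hbound : ∀ n, r n ≤ r 0 + S :=
    le_add_tsum_of_le_add he hsum fun n => (hstep n).trans (by linarith [htr n])
  have hdecr : ∀ n, δ * s n ≤ r n ^ 2 - r (n + 1) ^ 2 + (2 * (r 0 + S) + S) * e n := by
    intro n
    have hsq : r (n + 1) ^ 2 ≤ (t n + e n) ^ 2 :=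
      pow_le_pow_left₀ (hr _) (hstep n) 2
    nlinarith [hdesc n, mul_le_mul_of_nonneg_left ((htr n).trans (hbound n)) (he n),
      mul_le_mul_of_nonneg_left (hS n) (he n)]
  refine (summable_mul_left_iff hδ.ne').mp (summable_of_sum_range_le
    (c := r 0 ^ 2 + (2 * (r 0 + S) + S) * S) (fun n => mul_nonneg hδ.le (hs n)) fun n => ?_)
  have hM : 0 ≤ 2 * (r 0 + S) + S := by linarith [hr 0, hS 0, he 0]
  calc ∑ k ∈ Finset.range n, δ * s k
      ≤ ∑ k ∈ Finset.range n, (r k ^ 2 - r (k + 1) ^ 2 + (2 * (r 0 + S) + S) * e k) :=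
        Finset.sum_le_sum fun k _ => hdecr k
    _ = r 0 ^ 2 - r n ^ 2 + (2 * (r 0 + S) + S) * ∑ k ∈ Finset.range n, e k := by
        rw [Finset.sum_add_distrib, Finset.sum_range_sub' (fun k => r k ^ 2), Finset.mul_sum]
    _ ≤ r 0 ^ 2 + (2 * (r 0 + S) + S) * S := by
        nlinarith [sq_nonneg (r n), mul_le_mul_of_nonneg_left
          (hsum.sum_le_tsum (Finset.range n) fun k _ => he k) hM]

section

variable {H : Type*} [NormedAddCommGroup H] [InnerProductSpace ℝ H]
  {A : H → Set H} {B : H → H} {β γ : ℝ} {J : H → H}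

theorem IsResolvent.norm_apply_sub_le (hJ : IsResolvent γ A J) (hA : MonotoneSV A) (hγ : 0 ≤ γ)
    (z z' : H) : ‖J z - J z'‖ ≤ ‖z - z'‖ := by
  obtain ⟨u, hu, hz⟩ := hJ z
  obtain ⟨u', hu', hz'⟩ := hJ z'
  have hsplit : z - z' = (J z - J z') + γ • (u - u') := by
    linear_combination (norm := module) hz - hz'
  have hinner : ‖J z - J z'‖ ^ 2 ≤ ⟪J z - J z', z - z'⟫_ℝ := by
    rw [hsplit, inner_add_right, real_inner_smul_right, real_inner_self_eq_norm_sq]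
    nlinarith [mul_nonneg hγ (hA _ _ _ _ hu hu')]
  nlinarith [real_inner_le_norm (J z - J z') (z - z'), norm_nonneg (J z - J z'),
    norm_nonneg (z - z')]

theorem norm_smul_sub_le_of_mul_le_one (hBlip : ∀ x y : H, ‖B x - B y‖ ≤ β * ‖x - y‖)
    (hγ : 0 ≤ γ) (hγβ : γ * β ≤ 1) (x y : H) : ‖γ • (B x - B y)‖ ≤ ‖x - y‖ :=
  calc ‖γ • (B x - B y)‖ = γ * ‖B x - B y‖ := by rw [norm_smul, Real.norm_of_nonneg hγ]
    _ ≤ γ * (β * ‖x - y‖) := mul_le_mul_of_nonneg_left (hBlip x y) hγ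
    _ = (γ * β) * ‖x - y‖ := by ring
    _ ≤ ‖x - y‖ := mul_le_of_le_one_left (norm_nonneg _) hγβ

/-- Tseng's forward-backward-forward step, with `J` the resolvent of `γ A`. -/
def fbfStep (γ : ℝ) (J B : H → H) (v : H) : H :=
  J (v - γ • B v) + γ • (B v - B (J (v - γ • B v)))

theorem norm_fbfStep_sub_sq_le (hA : MonotoneSV A)
    (hBmono : ∀ x y : H, 0 ≤ ⟪x - y, B x - B y⟫_ℝ)
    (hBlip : ∀ x y : H, ‖B x - B y‖ ≤ β * ‖x - y‖) (hγ : 0 ≤ γ) (hJ : IsResolvent γ A J)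
    {w : H} (hw : -B w ∈ A w) (v : H) :
    ‖fbfStep γ J B v - w‖ ^ 2 ≤
      ‖v - w‖ ^ 2 - (1 - γ ^ 2 * β ^ 2) * ‖v - J (v - γ • B v)‖ ^ 2 := by
  obtain ⟨u, hu, hvu⟩ := hJ (v - γ • B v)
  set P := J (v - γ • B v)
  have hmono : 0 ≤ ⟪P - w, u + B P⟫_ℝ := by
    have hAmono := hA P w u (-B w) hu hw
    have hBPw := hBmono P w
    rw [sub_neg_eq_add, inner_add_right] at hAmono
    rw [inner_sub_right] at hBPw
    rw [inner_add_right]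
    linarith
  have hlip : ‖B v - B P‖ ^ 2 ≤ β ^ 2 * ‖v - P‖ ^ 2 := by
    rw [← mul_pow]
    exact pow_le_pow_left₀ (norm_nonneg _) (hBlip v P) 2
  have hTw : fbfStep γ J B v - w = (P - w) + γ • (B v - B P) := by
    unfold fbfStep; abel
  have hvw : v - w = (P - w) + (γ • (u + B P) + γ • (B v - B P)) := by
    linear_combination (norm := module) hvu
  have hvP : v - P = γ • (u + B P) + γ • (B v - B P) := by
    linear_combination (norm := module) hvu
  have hTv : ‖fbfStep γ J B v - w‖ ^ 2 = ‖v - w‖ ^ 2 - ‖v - P‖ ^ 2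
      - 2 * γ * ⟪P - w, u + B P⟫_ℝ + γ ^ 2 * ‖B v - B P‖ ^ 2 := by
    rw [hTw, hvw, norm_add_sq_real, norm_add_sq_real, inner_add_right (P - w) (γ • (u + B P)),
      ← hvP, real_inner_smul_right, real_inner_smul_right, norm_smul, Real.norm_of_nonneg hγ]
    ring
  rw [hTv]
  nlinarith [mul_nonneg hγ hmono, mul_le_mul_of_nonneg_left hlip (sq_nonneg γ)]

theorem norm_sub_fbfStep_le (hA : MonotoneSV A)
    (hBlip : ∀ x y : H, ‖B x - B y‖ ≤ β * ‖x - y‖) (hγ : 0 ≤ γ) (hγβ : γ * β ≤ 1)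
    (hJ : IsResolvent γ A J) {v y p q a b c : H} (hy : y = v - γ • (B v + a))
    (hp : p = J y + b) (hq : q = p - γ • (B p + c)) :
    ‖v - y + q - fbfStep γ J B v‖ ≤ 2 * (γ * ‖a‖ + ‖b‖) + γ * (‖a‖ + ‖c‖) := by
  set P := J (v - γ • B v)
  have hpP : ‖p - P‖ ≤ γ * ‖a‖ + ‖b‖ :=
    calc ‖p - P‖ = ‖(J y - P) + b‖ := by rw [hp]; abel_nf
      _ ≤ ‖y - (v - γ • B v)‖ + ‖b‖ :=
        (norm_add_le _ _).trans (by gcongr; exact hJ.norm_apply_sub_le hA hγ _ _)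
      _ = γ * ‖a‖ + ‖b‖ := by
        rw [hy, show v - γ • (B v + a) - (v - γ • B v) = -(γ • a) by module, norm_neg,
          norm_smul, Real.norm_of_nonneg hγ]
  calc ‖v - y + q - fbfStep γ J B v‖ = ‖(p - P) - γ • (B p - B P) + γ • (a - c)‖ := by
        rw [hy, hq]; unfold fbfStep; congr 1; module
    _ ≤ ‖p - P‖ + ‖p - P‖ + γ * (‖a‖ + ‖c‖) := by
        refine (norm_add_le _ _).trans (add_le_add ((norm_sub_le _ _).trans ?_) ?_)
        · gcongr; exact norm_smul_sub_le_of_mul_le_one hBlip hγ hγβ _ _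
        · rw [norm_smul, Real.norm_of_nonneg hγ]; gcongr; exact norm_sub_le _ _
    _ ≤ 2 * (γ * ‖a‖ + ‖b‖) + γ * (‖a‖ + ‖c‖) := by linarith

theorem IsResolvent.exists_mem_norm_add_le (hJ : IsResolvent γ A J)
    (hBlip : ∀ x y : H, ‖B x - B y‖ ≤ β * ‖x - y‖) (hγ : 0 ≤ γ) (hγβ : γ * β ≤ 1) (v a : H) :
    ∃ u ∈ A (J (v - γ • (B v + a))),
      γ * ‖u + B (J (v - γ • (B v + a)))‖ ≤ 2 * ‖v - J (v - γ • (B v + a))‖ + γ * ‖a‖ := by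
  obtain ⟨u, hu, hz⟩ := hJ (v - γ • (B v + a))
  set P := J (v - γ • (B v + a))
  refine ⟨u, hu, ?_⟩
  calc γ * ‖u + B P‖ = ‖γ • (u + B P)‖ := by rw [norm_smul, Real.norm_of_nonneg hγ]
    _ = ‖(v - P) - γ • (B v - B P) - γ • a‖ := by
        congr 1
        linear_combination (norm := module) -hz
    _ ≤ ‖v - P‖ + ‖v - P‖ + γ * ‖a‖ := by
        refine (norm_sub_le _ _).trans (add_le_add ((norm_sub_le _ _).trans ?_) ?_)
        · gcongr; exact norm_smul_sub_le_of_mul_le_one hBlip hγ hγβ _ _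
        · rw [norm_smul, Real.norm_of_nonneg hγ]
    _ = 2 * ‖v - P‖ + γ * ‖a‖ := by ring

theorem WeakTendsto.of_tendsto_sub {x z : ℕ → H} {l : H} (hx : WeakTendsto x l)
    (hxz : Tendsto (fun n => x n - z n) atTop (𝓝 0)) : WeakTendsto z l := by
  intro w
  have hinner := (hx w).sub (hxz.inner (tendsto_const_nhds (x := w)))
  rw [inner_zero_left, sub_zero] at hinner
  refine hinner.congr fun n => ?_
  rw [inner_sub_left, sub_sub_cancel]

end

theorem tendsto_norm_sub_resolvent_of_fbf {H : Type*} [NormedAddCommGroup H]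
    [InnerProductSpace ℝ H] {A : H → Set H} (hA : MonotoneSV A) {β : ℝ} (hβ : 0 < β) {B : H → H}
    (hBmono : ∀ x y : H, 0 ≤ ⟪x - y, B x - B y⟫_ℝ)
    (hBlip : ∀ x y : H, ‖B x - B y‖ ≤ β * ‖x - y‖) {a b c : ℕ → H}
    (ha : Summable fun n => ‖a n‖) (hb : Summable fun n => ‖b n‖)
    (hc : Summable fun n => ‖c n‖) {κ : ℝ} (hκ : κ < 1) {γ : ℕ → ℝ}
    (hγ : ∀ n, γ n ∈ Set.Icc 0 (κ / β)) {J : ℕ → H → H} (hJ : ∀ n, IsResolvent (γ n) A (J n))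
    {x y p q : ℕ → H} (hy : ∀ n, y n = x n - γ n • (B (x n) + a n))
    (hp : ∀ n, p n = J n (y n) + b n) (hq : ∀ n, q n = p n - γ n • (B (p n) + c n))
    (hx : ∀ n, x (n + 1) = x n - y n + q n) {w : H} (hw : -B w ∈ A w) :
    Tendsto (fun n => ‖x n - J n (y n)‖) atTop (𝓝 0) := by
  have hγ0 : ∀ n, 0 ≤ γ n := fun n => (hγ n).1
  have hγβ : ∀ n, γ n * β ≤ κ := fun n => (le_div_iff₀ hβ).mp (hγ n).2
  have hκ0 : 0 ≤ κ := (mul_nonneg (hγ0 0) hβ.le).trans (hγβ 0)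
  have hscale : ∀ {f : ℕ → ℝ}, (∀ n, 0 ≤ f n) → Summable f → Summable fun n => γ n * f n :=
    fun hf0 hf => hf.mul_left (κ / β) |>.of_nonneg_of_le
      (fun n => mul_nonneg (hγ0 n) (hf0 n)) fun n => by gcongr; exacts [hf0 n, (hγ n).2]
  set e : ℕ → ℝ := fun n => 2 * (γ n * ‖a n‖ + ‖b n‖) + γ n * (‖a n‖ + ‖c n‖)
  have he : Summable e :=
    (((hscale (fun _ => norm_nonneg _) ha).add hb).mul_left 2).add
      (hscale (fun _ => by positivity) (ha.add hc))
  set P : ℕ → H := fun n => J n (x n - γ n • B (x n))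
  have hsq : Summable fun n => ‖x n - P n‖ ^ 2 := by
    refine summable_of_quasiFejer (r := fun n => ‖x n - w‖)
      (t := fun n => ‖fbfStep (γ n) (J n) B (x n) - w‖) (δ := 1 - κ ^ 2) (by nlinarith)
      (fun _ => norm_nonneg _) (fun _ => norm_nonneg _) (fun _ => sq_nonneg _)
      (fun n => by have := hγ0 n; positivity) he (fun n => ?_) (fun n => ?_)
    · have hstep := norm_sub_fbfStep_le hA hBlip (hγ0 n) ((hγβ n).trans hκ.le) (hJ n) (hy n)
        (hp n) (hq n)
      rw [← hx n] at hstep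
      linarith [norm_sub_le_norm_sub_add_norm_sub (x (n + 1)) (fbfStep (γ n) (J n) B (x n)) w]
    · have hγβsq : (γ n) ^ 2 * β ^ 2 ≤ κ ^ 2 := by
        rw [← mul_pow]; exact pow_le_pow_left₀ (mul_nonneg (hγ0 n) hβ.le) (hγβ n) 2
      nlinarith [norm_fbfStep_sub_sq_le hA hBmono hBlip (hγ0 n) (hJ n) hw (x n),
        sq_nonneg ‖x n - P n‖]
  have hxP : Tendsto (fun n => ‖x n - P n‖) atTop (𝓝 0) := by
    simpa using hsq.tendsto_atTop_zero.sqrt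
  refine squeeze_zero (fun _ => norm_nonneg _) (fun n => ?_)
    (by simpa using hxP.add (ha.tendsto_atTop_zero.const_mul (κ / β)))
  calc ‖x n - J n (y n)‖ ≤ ‖x n - P n‖ + ‖P n - J n (y n)‖ :=
        norm_sub_le_norm_sub_add_norm_sub _ _ _
    _ ≤ ‖x n - P n‖ + γ n * ‖a n‖ := by
        gcongr
        refine ((hJ n).norm_apply_sub_le hA (hγ0 n) _ _).trans_eq ?_
        rw [hy n, show x n - γ n • B (x n) - (x n - γ n • (B (x n) + a n)) = γ n • a n by module,
          norm_smul, Real.norm_of_nonneg (hγ0 n)]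
    _ ≤ ‖x n - P n‖ + κ / β * ‖a n‖ := by gcongr; exact (hγ n).2

theorem stmt_2_general {H : Type*} [NormedAddCommGroup H] [InnerProductSpace ℝ H]
    (A : H → Set H) (hA : MaxMonotone A)
    (β : ℝ) (hβ : 0 < β)
    (B : H → H)
    (hBmono : ∀ x y : H, 0 ≤ ⟪x - y, B x - B y⟫_ℝ)
    (hBlip : ∀ x y : H, ‖B x - B y‖ ≤ β * ‖x - y‖)
    (a b c : ℕ → H)
    (ha : Summable fun n => ‖a n‖) (hb : Summable fun n => ‖b n‖)
    (hc : Summable fun n => ‖c n‖)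
    (ε : ℝ) (hε : ε ∈ Set.Ioo (0:ℝ) (1 / (β + 1)))
    (γ : ℕ → ℝ) (hγ : ∀ n, γ n ∈ Set.Icc ε ((1 - ε) / β))
    (J : ℕ → H → H) (hJ : ∀ n, IsResolvent (γ n) A (J n))
    (x y p q : ℕ → H)
    (hy : ∀ n, y n = x n - γ n • (B (x n) + a n))
    (hp : ∀ n, p n = J n (y n) + b n)
    (hq : ∀ n, q n = p n - γ n • (B (p n) + c n))
    (hx : ∀ n, x (n + 1) = x n - y n + q n)
    (xbar : H) (hxbar : -B xbar ∈ A xbar)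
    (hweak : WeakTendsto x xbar)
    (hdemi : Demiregular (fun w => (· + B w) '' A w) xbar) :
    Filter.Tendsto x Filter.atTop (nhds xbar) ∧
      Filter.Tendsto p Filter.atTop (nhds xbar) := by
  obtain ⟨hε0, hε1⟩ := hε
  have hε1' : ε < 1 := hε1.trans_le (div_le_one_of_le₀ (by linarith) (by linarith))
  have hγ0 : ∀ n, 0 < γ n := fun n => hε0.trans_le (hγ n).1
  have hγβ : ∀ n, γ n * β ≤ 1 := fun n => ((le_div_iff₀ hβ).mp (hγ n).2).trans (by linarith)
  have hxJ := tendsto_norm_sub_resolvent_of_fbf hA.1 hβ hBmono hBlip ha hb hc (κ := 1 - ε)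
    (by linarith) (fun n => ⟨(hγ0 n).le, (hγ n).2⟩) hJ hy hp hq hx hxbar
  choose u hu hres using fun n => by
    have h := (hJ n).exists_mem_norm_add_le hBlip (hγ0 n).le (hγβ n) (x n) (a n)
    rwa [← hy n] at h
  have hv : Tendsto (fun n => u n + B (J n (y n))) atTop (𝓝 0) := by
    rw [tendsto_zero_iff_norm_tendsto_zero]
    refine squeeze_zero (fun _ => norm_nonneg _) (fun n => ?_)
      (by simpa using (hxJ.const_mul (2 / ε)).add ha.tendsto_atTop_zero)
    rw [div_mul_eq_mul_div, ← sub_le_iff_le_add, le_div_iff₀ hε0]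
    rcases le_total ‖u n + B (J n (y n))‖ ‖a n‖ with hle | hle
    · nlinarith [norm_nonneg (x n - J n (y n))]
    · nlinarith [hres n, mul_le_mul_of_nonneg_right (hγ n).1 (sub_nonneg.2 hle)]
  have hxJ' := tendsto_zero_iff_norm_tendsto_zero.2 hxJ
  have hpt : Tendsto (fun n => J n (y n)) atTop (𝓝 xbar) :=
    hdemi _ _ 0 (fun n => ⟨u n, hu n, rfl⟩) ⟨-B xbar, hxbar, neg_add_cancel _⟩
      (hweak.of_tendsto_sub hxJ') hv
  refine ⟨by simpa using hpt.add hxJ', ?_⟩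
  rw [funext hp]
  simpa using hpt.add (tendsto_zero_iff_norm_tendsto_zero.2 hb.tendsto_atTop_zero)

theorem stmt_2 {H : Type*} [NormedAddCommGroup H] [InnerProductSpace ℝ H] [CompleteSpace H]
    (A : H → Set H) (hA : MaxMonotone A)
    (β : ℝ) (hβ : 0 < β)
    (B : H → H)
    (hBmono : ∀ x y : H, 0 ≤ ⟪x - y, B x - B y⟫_ℝ)
    (hBlip : ∀ x y : H, ‖B x - B y‖ ≤ β * ‖x - y‖)
    (hzer : ∃ w : H, -B w ∈ A w)
    (a b c : ℕ → H)
    (ha : Summable fun n => ‖a n‖) (hb : Summable fun n => ‖b n‖)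
    (hc : Summable fun n => ‖c n‖)
    (ε : ℝ) (hε : ε ∈ Set.Ioo (0:ℝ) (1 / (β + 1)))
    (γ : ℕ → ℝ) (hγ : ∀ n, γ n ∈ Set.Icc ε ((1 - ε) / β))
    (J : ℕ → H → H) (hJ : ∀ n, IsResolvent (γ n) A (J n))
    (x y p q : ℕ → H)
    (hy : ∀ n, y n = x n - γ n • (B (x n) + a n))
    (hp : ∀ n, p n = J n (y n) + b n)
    (hq : ∀ n, q n = p n - γ n • (B (p n) + c n))
    (hx : ∀ n, x (n + 1) = x n - y n + q n)
    (xbar : H) (hxbar : -B xbar ∈ A xbar)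
    (hweak : WeakTendsto x xbar)
    (hdemi : Demiregular (fun w => (· + B w) '' A w) xbar) :
    Filter.Tendsto x Filter.atTop (nhds xbar) ∧
      Filter.Tendsto p Filter.atTop (nhds xbar) :=
  stmt_2_general A hA β hβ B hBmono hBlip a b c ha hb hc ε hε γ hγ J hJ x y p q hy hp hq hx xbar
    hxbar hweak hdemi
end

section
/- Let H be a real Hilbert space, let A : H → 2^H be maximally monotone, let β > 0, and let B : H → H be a monotone, β-Lipschitz operator with zer(A+B) ≠ ∅. Let (a_n), (b_n), (c_n) be sequences in H with Σ_n ‖a_n‖ < ∞, Σ_n ‖b_n‖ < ∞, Σ_n ‖c_n‖ < ∞, let x_0 ∈ H, let ε ∈ (0, 1/(β+1)), let (γ_n) be a sequence in [ε, (1−ε)/β], and define for every n: y_n = x_n − γ_n(B x_n + a_n); p_n = J_{γ_n A} y_n + b_n; q_n = p_n − γ_n(B p_n + c_n); x_{n+1} = x_n − y_n + q_n. Let x̄ ∈ zer(A+B) be the weak limit of (x_n). If A or B is uniformly monotone at x̄, then x_n → x̄ and p_n → x̄ in norm. -/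
open scoped InnerProductSpace
open Filter Topology

/-- `M` is uniformly monotone at `x`: there is an increasing function `φ` on `[0,∞)`
vanishing only at `0` such that `⟪x - y, u - v⟫ ≥ φ (‖x - y‖)` for every `u ∈ M x` and
every `(y, v)` in the graph of `M`. -/
def UnifMonoAt {H : Type*} [NormedAddCommGroup H] [InnerProductSpace ℝ H]
    (M : H → Set H) (x : H) : Prop :=
  ∃ φ : ℝ → ℝ, (∀ s t : ℝ, 0 ≤ s → s ≤ t → φ s ≤ φ t) ∧ φ 0 = 0 ∧
    (∀ t : ℝ, 0 < t → 0 < φ t) ∧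
    ∀ u ∈ M x, ∀ y v, v ∈ M y → φ ‖x - y‖ ≤ ⟪x - y, u - v⟫_ℝ

private lemma sq_le_imp' {a b : ℝ} (ha : 0 ≤ a) (hb : 0 ≤ b) (h : a ^ 2 ≤ b ^ 2) : a ≤ b := by
  nlinarith

/-- Expansion identity used in the key Tseng estimate. -/
private lemma key_identity {H : Type*} [NormedAddCommGroup H] [InnerProductSpace ℝ H]
    (P D E : H) (γ : ℝ) :
    ‖P + γ • E‖ ^ 2
      = ‖D + P‖ ^ 2 - ‖D‖ ^ 2 + γ ^ 2 * ‖E‖ ^ 2 - 2 * ⟪P, D - γ • E⟫_ℝ := by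
  have h1 : ‖P + γ • E‖ ^ 2 = ‖P‖ ^ 2 + 2 * (γ * ⟪P, E⟫_ℝ) + γ ^ 2 * ‖E‖ ^ 2 := by
    rw [norm_add_sq_real, real_inner_smul_right, norm_smul]
    simp [Real.norm_eq_abs, mul_pow, sq_abs]
  have h2 : ‖D + P‖ ^ 2 = ‖D‖ ^ 2 + 2 * ⟪D, P⟫_ℝ + ‖P‖ ^ 2 := norm_add_sq_real D P
  have h3 : ⟪P, D - γ • E⟫_ℝ = ⟪P, D⟫_ℝ - γ * ⟪P, E⟫_ℝ := by
    rw [inner_sub_right, real_inner_smul_right]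
  have h4 : ⟪P, D⟫_ℝ = ⟪D, P⟫_ℝ := real_inner_comm D P
  rw [h1, h2, h3, h4]; ring

set_option maxHeartbeats 1000000 in
theorem stmt_3 {H : Type*} [NormedAddCommGroup H] [InnerProductSpace ℝ H] [CompleteSpace H]
    (A : H → Set H) (hA : MaxMonotone A)
    (β : ℝ) (hβ : 0 < β)
    (B : H → H)
    (hBmono : ∀ x y : H, 0 ≤ ⟪x - y, B x - B y⟫_ℝ)
    (hBlip : ∀ x y : H, ‖B x - B y‖ ≤ β * ‖x - y‖)
    (hzer : ∃ w : H, -B w ∈ A w)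
    (a b c : ℕ → H)
    (ha : Summable fun n => ‖a n‖) (hb : Summable fun n => ‖b n‖)
    (hc : Summable fun n => ‖c n‖)
    (ε : ℝ) (hε : ε ∈ Set.Ioo (0:ℝ) (1 / (β + 1)))
    (γ : ℕ → ℝ) (hγ : ∀ n, γ n ∈ Set.Icc ε ((1 - ε) / β))
    (J : ℕ → H → H) (hJ : ∀ n, IsResolvent (γ n) A (J n))
    (x y p q : ℕ → H)
    (hy : ∀ n, y n = x n - γ n • (B (x n) + a n))
    (hp : ∀ n, p n = J n (y n) + b n)
    (hq : ∀ n, q n = p n - γ n • (B (p n) + c n))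
    (hx : ∀ n, x (n + 1) = x n - y n + q n)
    (xbar : H) (hxbar : -B xbar ∈ A xbar)
    (hweak : WeakTendsto x xbar)
    (hunif : UnifMonoAt A xbar ∨ UnifMonoAt (fun w => {B w}) xbar) :
    Filter.Tendsto x Filter.atTop (nhds xbar) ∧
      Filter.Tendsto p Filter.atTop (nhds xbar) := by
  classical
  obtain ⟨hAmono, -⟩ := hA
  obtain ⟨hε0, hε1⟩ := hε
  have hβ1 : (0:ℝ) < β + 1 := by linarith
  have hεlt1 : ε < 1 := by
    have : 1 / (β + 1) ≤ 1 := by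
      rw [div_le_one hβ1]; linarith
    linarith
  set Γ : ℝ := (1 - ε) / β with hΓdef
  have hΓpos : 0 < Γ := div_pos (by linarith) hβ
  have hγpos : ∀ n, 0 < γ n := fun n => lt_of_lt_of_le hε0 (hγ n).1
  have hγΓ : ∀ n, γ n ≤ Γ := fun n => (hγ n).2
  have hγβ : ∀ n, γ n * β ≤ 1 - ε := by
    intro n
    have h := (hγ n).2
    have hΓβ : Γ * β = 1 - ε := by
      rw [hΓdef]; field_simp
    nlinarith
  -- unified uniform monotonicity function φ
  obtain ⟨φ, hmono, hφ0, hφpos, hφkey⟩ :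
      ∃ φ : ℝ → ℝ, (∀ s t : ℝ, 0 ≤ s → s ≤ t → φ s ≤ φ t) ∧ φ 0 = 0 ∧
        (∀ t : ℝ, 0 < t → 0 < φ t) ∧
        (∀ pp u, u ∈ A pp →
          φ ‖pp - xbar‖ ≤ ⟪pp - xbar, B pp - B xbar⟫_ℝ + ⟪pp - xbar, u + B xbar⟫_ℝ) := by
    rcases hunif with ⟨φ, h1, h2, h3, h4⟩ | ⟨φ, h1, h2, h3, h4⟩
    · refine ⟨φ, h1, h2, h3, fun pp u hu => ?_⟩
      have hkey := h4 (-B xbar) hxbar pp u hu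
      have hrw : ⟪xbar - pp, -B xbar - u⟫_ℝ = ⟪pp - xbar, u + B xbar⟫_ℝ := by
        rw [show xbar - pp = -(pp - xbar) by abel, show -B xbar - u = -(u + B xbar) by abel,
          inner_neg_neg]
      rw [norm_sub_rev pp xbar]
      have hB := hBmono pp xbar
      rw [hrw] at hkey
      linarith
    · refine ⟨φ, h1, h2, h3, fun pp u hu => ?_⟩
      have hkey := h4 (B xbar) rfl pp (B pp) rfl
      have hrw : ⟪xbar - pp, B xbar - B pp⟫_ℝ = ⟪pp - xbar, B pp - B xbar⟫_ℝ := by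
        rw [show xbar - pp = -(pp - xbar) by abel, show B xbar - B pp = -(B pp - B xbar) by abel,
          inner_neg_neg]
      have hAterm : 0 ≤ ⟪pp - xbar, u + B xbar⟫_ℝ := by
        have := hAmono pp xbar u (-B xbar) hu hxbar
        rwa [sub_neg_eq_add] at this
      rw [norm_sub_rev pp xbar]
      rw [hrw] at hkey
      linarith
  have hφnn : ∀ t : ℝ, 0 ≤ t → 0 ≤ φ t := by
    intro t ht
    rw [← hφ0]
    exact hmono 0 t le_rfl ht
  -- nonexpansiveness of the resolvents
  have hJne : ∀ n (w w' : H), ‖J n w - J n w'‖ ≤ ‖w - w'‖ := by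
    intro n w w'
    obtain ⟨u, hu, hw⟩ := hJ n w
    obtain ⟨u', hu', hw'⟩ := hJ n w'
    have hmon := hAmono (J n w) (J n w') u u' hu hu'
    have hgu : γ n • u = w - J n w := eq_sub_of_add_eq' hw.symm
    have hgu' : γ n • u' = w' - J n w' := eq_sub_of_add_eq' hw'.symm
    have hdiff : w - w' = (J n w - J n w') + γ n • (u - u') := by
      rw [smul_sub, hgu, hgu']; abel
    have hexp : ‖w - w'‖ ^ 2
        = ‖J n w - J n w'‖ ^ 2 + 2 * (γ n * ⟪J n w - J n w', u - u'⟫_ℝ)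
          + ‖γ n • (u - u')‖ ^ 2 := by
      rw [hdiff, norm_add_sq_real, real_inner_smul_right]
    have hγn := hγpos n
    refine sq_le_imp' (norm_nonneg _) (norm_nonneg _) ?_
    nlinarith [sq_nonneg ‖γ n • (u - u')‖]
  -- error-free auxiliary sequences
  set pt : ℕ → H := fun n => J n (x n - γ n • B (x n)) with hptdef
  have hres : ∀ n, ∃ u, u ∈ A (pt n) ∧ x n - γ n • B (x n) = pt n + γ n • u := by
    intro n
    obtain ⟨u, hu, hw⟩ := hJ n (x n - γ n • B (x n))
    exact ⟨u, hu, hw⟩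
  set ut : ℕ → H := fun n => (hres n).choose with hutdef
  have hutA : ∀ n, ut n ∈ A (pt n) := fun n => (hres n).choose_spec.1
  have hutEq : ∀ n, x n - γ n • B (x n) = pt n + γ n • ut n := fun n => (hres n).choose_spec.2
  set v : ℕ → H := fun n => pt n + γ n • (B (x n) - B (pt n)) with hvdef
  set κ : ℝ := 1 - (1 - ε) ^ 2 with hκdef
  have hκpos : 0 < κ := by rw [hκdef]; nlinarith
  -- Fact 1: key inequality
  have hkey1 : ∀ n, ‖v n - xbar‖ ^ 2
      ≤ ‖x n - xbar‖ ^ 2 - κ * ‖x n - pt n‖ ^ 2 - 2 * ε * φ ‖pt n - xbar‖ := by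
    intro n
    have hxe : x n - xbar = (x n - pt n) + (pt n - xbar) := by abel
    have hv' : v n - xbar = (pt n - xbar) + γ n • (B (x n) - B (pt n)) := by
      simp only [hvdef]; abel
    have hgu : γ n • ut n = x n - γ n • B (x n) - pt n := eq_sub_of_add_eq' (hutEq n).symm
    have hDE : (x n - pt n) - γ n • (B (x n) - B (pt n)) = γ n • (ut n + B (pt n)) := by
      rw [smul_add, hgu, smul_sub]; abel
    have hid := key_identity (pt n - xbar) (x n - pt n) (B (x n) - B (pt n)) (γ n)
    have hinner : ⟪pt n - xbar, (x n - pt n) - γ n • (B (x n) - B (pt n))⟫_ℝ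
        = γ n * (⟪pt n - xbar, B (pt n) - B xbar⟫_ℝ + ⟪pt n - xbar, ut n + B xbar⟫_ℝ) := by
      rw [hDE, real_inner_smul_right]
      congr 1
      rw [← inner_add_right]
      congr 1
      abel
    have hφk := hφkey (pt n) (ut n) (hutA n)
    have hφnn' : 0 ≤ φ ‖pt n - xbar‖ := hφnn _ (norm_nonneg _)
    have hγε : ε ≤ γ n := (hγ n).1
    have hEle : ‖B (x n) - B (pt n)‖ ≤ β * ‖x n - pt n‖ := hBlip (x n) (pt n)
    have hsq : γ n ^ 2 * ‖B (x n) - B (pt n)‖ ^ 2 ≤ (1 - ε) ^ 2 * ‖x n - pt n‖ ^ 2 := by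
      have h0 : 0 ≤ γ n * ‖B (x n) - B (pt n)‖ := mul_nonneg (hγpos n).le (norm_nonneg _)
      have h1 : γ n * ‖B (x n) - B (pt n)‖ ≤ (1 - ε) * ‖x n - pt n‖ := by
        have h2 : γ n * ‖B (x n) - B (pt n)‖ ≤ γ n * (β * ‖x n - pt n‖) :=
          mul_le_mul_of_nonneg_left hEle (hγpos n).le
        have h3 : γ n * (β * ‖x n - pt n‖) ≤ (1 - ε) * ‖x n - pt n‖ := by
          rw [← mul_assoc]
          exact mul_le_mul_of_nonneg_right (hγβ n) (norm_nonneg _)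
        exact h2.trans h3
      calc γ n ^ 2 * ‖B (x n) - B (pt n)‖ ^ 2
          = (γ n * ‖B (x n) - B (pt n)‖) * (γ n * ‖B (x n) - B (pt n)‖) := by ring
        _ ≤ ((1 - ε) * ‖x n - pt n‖) * ((1 - ε) * ‖x n - pt n‖) :=
            mul_self_le_mul_self h0 h1
        _ = (1 - ε) ^ 2 * ‖x n - pt n‖ ^ 2 := by ring
    have hdrop : γ n * φ ‖pt n - xbar‖
        ≤ ⟪pt n - xbar, (x n - pt n) - γ n • (B (x n) - B (pt n))⟫_ℝ := by
      rw [hinner]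
      exact mul_le_mul_of_nonneg_left hφk (hγpos n).le
    have hεφ : 2 * ε * φ ‖pt n - xbar‖ ≤ 2 * (γ n * φ ‖pt n - xbar‖) := by
      have h0 := mul_le_mul_of_nonneg_right hγε hφnn'
      linarith
    rw [hv', hxe, hid, hκdef]
    linarith
  -- error sequence
  set es : ℕ → ℝ := fun n => 3 * Γ * ‖a n‖ + 2 * ‖b n‖ + Γ * ‖c n‖ with hesdef
  have hes_nonneg : ∀ n, 0 ≤ es n := by
    intro n
    have h1 := norm_nonneg (a n); have h2 := norm_nonneg (b n); have h3 := norm_nonneg (c n)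
    simp only [hesdef]
    nlinarith
  have hes_sum : Summable es := by
    refine Summable.add (Summable.add ?_ ?_) ?_
    · exact ha.mul_left _
    · exact hb.mul_left _
    · exact hc.mul_left _
  -- ‖p n - pt n‖ bound
  have hppt : ∀ n, ‖p n - pt n‖ ≤ ‖b n‖ + Γ * ‖a n‖ := by
    intro n
    have h1 : p n - pt n = b n + (J n (y n) - J n (x n - γ n • B (x n))) := by
      rw [hp n]; simp only [hptdef]; abel
    have h2 : ‖J n (y n) - J n (x n - γ n • B (x n))‖ ≤ ‖y n - (x n - γ n • B (x n))‖ :=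
      hJne n _ _
    have h3 : y n - (x n - γ n • B (x n)) = -(γ n • a n) := by
      rw [hy n, smul_add]; abel
    have h4 : ‖y n - (x n - γ n • B (x n))‖ = γ n * ‖a n‖ := by
      rw [h3, norm_neg, norm_smul, Real.norm_eq_abs, abs_of_pos (hγpos n)]
    have h5 : γ n * ‖a n‖ ≤ Γ * ‖a n‖ :=
      mul_le_mul_of_nonneg_right (hγΓ n) (norm_nonneg _)
    calc ‖p n - pt n‖ ≤ ‖b n‖ + ‖J n (y n) - J n (x n - γ n • B (x n))‖ := by
          rw [h1]; exact norm_add_le _ _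
      _ ≤ ‖b n‖ + Γ * ‖a n‖ := by rw [h4] at h2; linarith
  -- Fact 2: error bound
  have hkey2 : ∀ n, ‖x (n + 1) - v n‖ ≤ es n := by
    intro n
    have h1 : x (n + 1) - v n
        = (p n - pt n) - γ n • (B (p n) - B (pt n)) + γ n • a n - γ n • c n := by
      rw [hx n, hq n, hy n]
      simp only [hvdef, smul_add, smul_sub]
      abel
    have e1 : ‖γ n • a n‖ = γ n * ‖a n‖ := by
      rw [norm_smul, Real.norm_eq_abs, abs_of_pos (hγpos n)]
    have e2 : ‖γ n • c n‖ = γ n * ‖c n‖ := by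
      rw [norm_smul, Real.norm_eq_abs, abs_of_pos (hγpos n)]
    have e3 : ‖γ n • (B (p n) - B (pt n))‖ = γ n * ‖B (p n) - B (pt n)‖ := by
      rw [norm_smul, Real.norm_eq_abs, abs_of_pos (hγpos n)]
    have t1 := norm_sub_le ((p n - pt n) - γ n • (B (p n) - B (pt n)) + γ n • a n) (γ n • c n)
    rw [e2] at t1
    have t2 := norm_add_le ((p n - pt n) - γ n • (B (p n) - B (pt n))) (γ n • a n)
    rw [e1] at t2
    have t3 := norm_sub_le (p n - pt n) (γ n • (B (p n) - B (pt n)))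
    rw [e3] at t3
    have h3 : γ n * ‖B (p n) - B (pt n)‖ ≤ ‖p n - pt n‖ := by
      have hl := hBlip (p n) (pt n)
      have h0 : γ n * ‖B (p n) - B (pt n)‖ ≤ γ n * (β * ‖p n - pt n‖) :=
        mul_le_mul_of_nonneg_left hl (hγpos n).le
      have h7 : γ n * (β * ‖p n - pt n‖) ≤ (1 - ε) * ‖p n - pt n‖ := by
        rw [← mul_assoc]
        exact mul_le_mul_of_nonneg_right (hγβ n) (norm_nonneg _)
      have h8 : 0 ≤ ε * ‖p n - pt n‖ := mul_nonneg hε0.le (norm_nonneg _)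
      nlinarith
    have h4 := hppt n
    have h5 : γ n * ‖a n‖ ≤ Γ * ‖a n‖ := mul_le_mul_of_nonneg_right (hγΓ n) (norm_nonneg _)
    have h6 : γ n * ‖c n‖ ≤ Γ * ‖c n‖ := mul_le_mul_of_nonneg_right (hγΓ n) (norm_nonneg _)
    rw [h1]
    simp only [hesdef]
    linarith
  -- quasi-Fejér monotonicity
  set d : ℕ → ℝ := fun n => ‖x n - xbar‖ with hddef
  have hd_nonneg : ∀ n, 0 ≤ d n := fun n => norm_nonneg _
  have hvle : ∀ n, ‖v n - xbar‖ ≤ d n := by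
    intro n
    refine sq_le_imp' (norm_nonneg _) (hd_nonneg n) ?_
    have h0 := hkey1 n
    have h1 : 0 ≤ κ * ‖x n - pt n‖ ^ 2 := mul_nonneg hκpos.le (sq_nonneg _)
    have h2 : 0 ≤ 2 * ε * φ ‖pt n - xbar‖ :=
      mul_nonneg (by linarith) (hφnn _ (norm_nonneg _))
    simp only [hddef]
    linarith
  have htri : ∀ n, ‖x (n + 1) - xbar‖ ≤ ‖x (n + 1) - v n‖ + ‖v n - xbar‖ := by
    intro n
    have h := norm_add_le (x (n + 1) - v n) (v n - xbar)
    rwa [show (x (n + 1) - v n) + (v n - xbar) = x (n + 1) - xbar by abel] at h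
  have hd1 : ∀ n, d (n + 1) ≤ d n + es n := by
    intro n
    have h1 := htri n
    have h2 := hkey2 n
    have h3 := hvle n
    simp only [hddef] at h3 ⊢
    linarith
  set S : ℝ := ∑' n, es n with hSdef
  have hS0 : 0 ≤ S := tsum_nonneg hes_nonneg
  have hesS : ∀ n, es n ≤ S := fun n => Summable.le_tsum hes_sum n (fun j _ => hes_nonneg j)
  have hdbound : ∀ n, d n ≤ d 0 + S := by
    have hpart : ∀ n, d n ≤ d 0 + ∑ k ∈ Finset.range n, es k := by
      intro n
      induction n with
      | zero => simp
      | succ m ih =>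
        have := hd1 m
        rw [Finset.sum_range_succ]
        linarith
    intro n
    have h1 := hpart n
    have h2 : ∑ k ∈ Finset.range n, es k ≤ S :=
      Summable.sum_le_tsum (Finset.range n) (fun i _ => hes_nonneg i) hes_sum
    linarith
  set R : ℝ := d 0 + S with hRdef
  have hR0 : 0 ≤ R := by
    rw [hRdef]
    linarith [hd_nonneg 0]
  have h2RS : 0 ≤ 2 * R + S := by linarith
  set t : ℕ → ℝ := fun n => es n * (2 * R + S) with htdef
  have ht_sum : Summable t := hes_sum.mul_right _
  have ht_nonneg : ∀ n, 0 ≤ t n := fun n => mul_nonneg (hes_nonneg n) h2RS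
  set uu : ℕ → ℝ := fun n => κ * ‖x n - pt n‖ ^ 2 + 2 * ε * φ ‖pt n - xbar‖ with huudef
  have huu_nonneg : ∀ n, 0 ≤ uu n := by
    intro n
    have h1 : 0 ≤ κ * ‖x n - pt n‖ ^ 2 := mul_nonneg hκpos.le (sq_nonneg _)
    have h2 : 0 ≤ 2 * ε * φ ‖pt n - xbar‖ :=
      mul_nonneg (by linarith) (hφnn _ (norm_nonneg _))
    simp only [huudef]; linarith
  have hd2 : ∀ n, d (n + 1) ^ 2 + uu n ≤ d n ^ 2 + t n := by
    intro n
    have h2 := hkey1 n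
    have h3 := hvle n
    have h4 := hdbound n
    have h5 := hesS n
    have h6 := hes_nonneg n
    have h1 : ‖x (n + 1) - xbar‖ ≤ ‖v n - xbar‖ + es n := by
      have := htri n
      have := hkey2 n
      linarith
    have h9 : ‖x (n + 1) - xbar‖ ^ 2 ≤ (‖v n - xbar‖ + es n) ^ 2 :=
      pow_le_pow_left₀ (norm_nonneg _) h1 2
    have h10 : (‖v n - xbar‖ + es n) ^ 2
        = ‖v n - xbar‖ ^ 2 + 2 * (es n * ‖v n - xbar‖) + es n * es n := by ring
    simp only [hddef] at h3 h4 ⊢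
    have h4' : ‖x n - xbar‖ ≤ R := by rw [hRdef]; simp only [hddef]; linarith
    have h11 : es n * ‖v n - xbar‖ ≤ es n * R :=
      mul_le_mul_of_nonneg_left (h3.trans h4') h6
    have h12 : es n * es n ≤ es n * S := mul_le_mul_of_nonneg_left h5 h6
    have h13 : es n * (2 * R + S) = 2 * (es n * R) + es n * S := by ring
    simp only [huudef, htdef]
    linarith
  -- summability of uu
  have huu_sum : Summable uu := by
    set T : ℝ := ∑' n, t n with hTdef
    have hTn : ∀ N, ∑ k ∈ Finset.range N, t k ≤ T :=
      fun N => Summable.sum_le_tsum (Finset.range N) (fun i _ => ht_nonneg i) ht_sum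
    have hpart : ∀ N, ∑ k ∈ Finset.range N, uu k + d N ^ 2
        ≤ d 0 ^ 2 + ∑ k ∈ Finset.range N, t k := by
      intro N
      induction N with
      | zero => simp
      | succ m ih =>
        have := hd2 m
        rw [Finset.sum_range_succ, Finset.sum_range_succ]
        linarith
    refine summable_of_sum_range_le huu_nonneg (c := d 0 ^ 2 + T) ?_
    intro N
    have h1 := hpart N
    have h2 := hTn N
    have h3 := sq_nonneg (d N)
    linarith
  have huu0 : Tendsto uu atTop (𝓝 0) := huu_sum.tendsto_atTop_zero
  -- ‖x n - pt n‖ → 0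
  have hxpt2 : Tendsto (fun n => ‖x n - pt n‖ ^ 2) atTop (𝓝 0) := by
    have h1 : Tendsto (fun n => κ * ‖x n - pt n‖ ^ 2) atTop (𝓝 0) := by
      refine squeeze_zero (fun n => mul_nonneg hκpos.le (sq_nonneg _)) (fun n => ?_) huu0
      have h2 : 0 ≤ 2 * ε * φ ‖pt n - xbar‖ :=
        mul_nonneg (by linarith) (hφnn _ (norm_nonneg _))
      simp only [huudef]; linarith
    have h2 := h1.const_mul κ⁻¹
    rw [mul_zero] at h2
    have heq : (fun n => ‖x n - pt n‖ ^ 2) = fun n => κ⁻¹ * (κ * ‖x n - pt n‖ ^ 2) := by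
      funext n; rw [inv_mul_cancel_left₀ hκpos.ne']
    rw [heq]
    exact h2
  have hxpt : Tendsto (fun n => ‖x n - pt n‖) atTop (𝓝 0) := by
    have h := (Real.continuous_sqrt.tendsto 0).comp hxpt2
    rw [Real.sqrt_zero] at h
    have heq : (fun n => ‖x n - pt n‖) = Real.sqrt ∘ fun n => ‖x n - pt n‖ ^ 2 := by
      funext n
      simp [Function.comp, Real.sqrt_sq (norm_nonneg _)]
    rw [heq]
    exact h
  -- φ ‖pt n - xbar‖ → 0, hence ‖pt n - xbar‖ → 0
  have hφt : Tendsto (fun n => φ ‖pt n - xbar‖) atTop (𝓝 0) := by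
    have h1 : Tendsto (fun n => 2 * ε * φ ‖pt n - xbar‖) atTop (𝓝 0) := by
      refine squeeze_zero
        (fun n => mul_nonneg (by linarith) (hφnn _ (norm_nonneg _))) (fun n => ?_) huu0
      have h2 : 0 ≤ κ * ‖x n - pt n‖ ^ 2 := mul_nonneg hκpos.le (sq_nonneg _)
      simp only [huudef]; linarith
    have h2 := h1.const_mul (2 * ε)⁻¹
    rw [mul_zero] at h2
    have heq : (fun n => φ ‖pt n - xbar‖) = fun n => (2 * ε)⁻¹ * (2 * ε * φ ‖pt n - xbar‖) := by
      funext n; rw [inv_mul_cancel_left₀ (by positivity)]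
    rw [heq]
    exact h2
  have hptx : Tendsto (fun n => ‖pt n - xbar‖) atTop (𝓝 0) := by
    rw [Metric.tendsto_atTop]
    intro δ hδ
    obtain ⟨N, hN⟩ := (Metric.tendsto_atTop.mp hφt) (φ δ) (hφpos δ hδ)
    refine ⟨N, fun n hn => ?_⟩
    have h1 := hN n hn
    rw [Real.dist_eq, sub_zero] at h1 ⊢
    rw [abs_of_nonneg (norm_nonneg _)]
    by_contra hcon
    push_neg at hcon
    have h2 : φ δ ≤ φ ‖pt n - xbar‖ := hmono δ _ hδ.le hcon
    have h3 : 0 ≤ φ ‖pt n - xbar‖ := hφnn _ (norm_nonneg _)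
    rw [abs_of_nonneg h3] at h1
    linarith
  -- conclusion
  have hxconv : Tendsto x atTop (𝓝 xbar) := by
    rw [tendsto_iff_norm_sub_tendsto_zero]
    have hsum0 : Tendsto (fun n => ‖x n - pt n‖ + ‖pt n - xbar‖) atTop (𝓝 0) := by
      have h := hxpt.add hptx
      rwa [add_zero] at h
    refine squeeze_zero (fun n => norm_nonneg _) (fun n => ?_) hsum0
    have h := norm_add_le (x n - pt n) (pt n - xbar)
    rwa [show (x n - pt n) + (pt n - xbar) = x n - xbar by abel] at h
  refine ⟨hxconv, ?_⟩
  rw [tendsto_iff_norm_sub_tendsto_zero]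
  have ha0 : Tendsto (fun n => ‖a n‖) atTop (𝓝 0) := ha.tendsto_atTop_zero
  have hb0 : Tendsto (fun n => ‖b n‖) atTop (𝓝 0) := hb.tendsto_atTop_zero
  have hlim : Tendsto (fun n => (‖b n‖ + Γ * ‖a n‖) + ‖pt n - xbar‖) atTop (𝓝 0) := by
    have h1 : Tendsto (fun n => Γ * ‖a n‖) atTop (𝓝 0) := by
      have h := ha0.const_mul Γ
      rwa [mul_zero] at h
    have h2 := (hb0.add h1).add hptx
    rwa [add_zero, add_zero] at h2
  refine squeeze_zero (fun n => norm_nonneg _) (fun n => ?_) hlim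
  have h1 : ‖p n - xbar‖ ≤ ‖p n - pt n‖ + ‖pt n - xbar‖ := by
    have h := norm_add_le (p n - pt n) (pt n - xbar)
    rwa [show (p n - pt n) + (pt n - xbar) = p n - xbar by abel] at h
  have h2 := hppt n
  linarith
end

section
/- Let H and G be real Hilbert spaces, let A : H → 2^H and B : G → 2^G be maximally monotone, let L : H → G be a bounded linear operator, let z ∈ H and r ∈ G. Let P = {x ∈ H : z ∈ Ax + L*(B(Lx − r))} and D = {v ∈ G : −r ∈ −L(A^{-1}(z − L*v)) + B^{-1}v}. Let K = H ⊕ G and define M : K → 2^K by M(x,v) = (−z + Ax) × (r + B^{-1}v) and S : K → K by S(x,v) = (L*v, −Lx). Then zer(M+S) = {(x,v) ∈ K : 0 ∈ M(x,v) + S(x,v)} is a closed convex subset of P × D. -/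
open scoped InnerProductSpace

/-- Monotonicity of a set-valued operator on the Hilbert direct sum `H ⊕ G`,
whose inner product is `⟪(x,v),(y,w)⟫ = ⟪x,y⟫ + ⟪v,w⟫`. -/
def MonotoneProd {H G : Type*} [NormedAddCommGroup H] [InnerProductSpace ℝ H]
    [NormedAddCommGroup G] [InnerProductSpace ℝ G]
    (T : H × G → Set (H × G)) : Prop :=
  ∀ w₁ w₂ u₁ u₂ : H × G, u₁ ∈ T w₁ → u₂ ∈ T w₂ →
    0 ≤ ⟪w₁.1 - w₂.1, u₁.1 - u₂.1⟫_ℝ + ⟪w₁.2 - w₂.2, u₁.2 - u₂.2⟫_ℝ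

/-- Maximal monotonicity of a set-valued operator on the Hilbert direct sum `H ⊕ G`. -/
def MaxMonotoneProd {H G : Type*} [NormedAddCommGroup H] [InnerProductSpace ℝ H]
    [NormedAddCommGroup G] [InnerProductSpace ℝ G]
    (T : H × G → Set (H × G)) : Prop :=
  MonotoneProd T ∧ ∀ w u : H × G,
    (∀ w' u' : H × G, u' ∈ T w' →
      (0:ℝ) ≤ ⟪w.1 - w'.1, u.1 - u'.1⟫_ℝ + ⟪w.2 - w'.2, u.2 - u'.2⟫_ℝ) → u ∈ T w

/-- `zer(M+S)` is a closed convex subset of `P × D`, where `P` and `D` are the primal and dual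
solution sets. -/
theorem stmt_10 {H G : Type*} [NormedAddCommGroup H] [InnerProductSpace ℝ H] [CompleteSpace H]
    [NormedAddCommGroup G] [InnerProductSpace ℝ G] [CompleteSpace G]
    (A : H → Set H) (hA : MaxMonotone A)
    (B : G → Set G) (hB : MaxMonotone B)
    (L : H →L[ℝ] G) (z : H) (r : G)
    (P : Set H)
    (hP : P = {x : H | ∃ u ∈ A x, ∃ w ∈ B (L x - r), z = u + ContinuousLinearMap.adjoint L w})
    (D : Set G)
    (hD : D = {v : G | ∃ s : H, z - ContinuousLinearMap.adjoint L v ∈ A s ∧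
      ∃ g : G, v ∈ B g ∧ -r = -(L s) + g})
    (M : H × G → Set (H × G))
    (hM : M = fun w => {s : H × G | s.1 + z ∈ A w.1 ∧ w.2 ∈ B (s.2 - r)})
    (S : H × G → H × G)
    (hS : S = fun w => (ContinuousLinearMap.adjoint L w.2, -(L w.1)))
    (Z : Set (H × G))
    (hZ : Z = {w : H × G | ∃ m ∈ M w, m + S w = 0}) :
    IsClosed Z ∧ Convex ℝ Z ∧ Z ⊆ P ×ˢ D := by
  obtain ⟨hAm, hAmax⟩ := hA
  obtain ⟨hBm, hBmax⟩ := hB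
  set L' := ContinuousLinearMap.adjoint L with hL'
  have skew : ∀ x x' : H, ∀ v v' : G,
      ⟪x - x', L' v - L' v'⟫_ℝ + ⟪v - v', L x' - L x⟫_ℝ = 0 := by
    intro x x' v v'
    have h1 : L' v - L' v' = L' (v - v') := (map_sub L' v v').symm
    have h2 : L x' - L x = -(L (x - x')) := by rw [map_sub]; abel
    rw [h1, h2, hL', ContinuousLinearMap.adjoint_inner_right, inner_neg_right,
      real_inner_comm]
    ring
  have hZ' : Z = {w : H × G | -(L' w.2) + z ∈ A w.1 ∧ w.2 ∈ B (L w.1 - r)} := by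
    rw [hZ, hM, hS]
    ext w
    simp only [Set.mem_setOf_eq]
    constructor
    · rintro ⟨m, ⟨h1, h2⟩, h3⟩
      have hm : m = (-(L' w.2), L w.1) := by
        have h4 := eq_neg_of_add_eq_zero_left h3
        rw [h4, Prod.neg_mk, neg_neg]
      rw [hm] at h1 h2
      exact ⟨h1, h2⟩
    · rintro ⟨h1, h2⟩
      refine ⟨(-(L' w.2), L w.1), ⟨h1, h2⟩, ?_⟩
      apply Prod.ext <;> simp
  have hsub : Z ⊆ P ×ˢ D := by
    intro w hw
    rw [hZ'] at hw
    obtain ⟨h1, h2⟩ := hw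
    simp only [Set.mem_prod]
    constructor
    · rw [hP]
      exact ⟨-(L' w.2) + z, h1, w.2, h2, by abel⟩
    · rw [hD]
      refine ⟨w.1, by rw [sub_eq_neg_add]; exact h1, L w.1 - r, h2, by abel⟩
  set Q : (H × G) × (H × G) → Set (H × G) := fun p =>
    {w : H × G | ⟪w.1, p.2.1 + L' p.1.2⟫_ℝ + ⟪w.2, p.2.2 - L p.1.1⟫_ℝ ≤
      ⟪p.1.1, p.2.1 + L' p.1.2⟫_ℝ + ⟪p.1.2, p.2.2 - L p.1.1⟫_ℝ} with hQ
  have hchar : Z = ⋂ p ∈ {p : (H × G) × (H × G) |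
      p.2.1 + z ∈ A p.1.1 ∧ p.1.2 ∈ B (p.2.2 - r)}, Q p := by
    ext w
    rw [hZ']
    simp only [Set.mem_iInter, Set.mem_setOf_eq, hQ]
    constructor
    · rintro ⟨h1, h2⟩ p ⟨hp1, hp2⟩
      have mA := hAm w.1 p.1.1 (-(L' w.2) + z) (p.2.1 + z) h1 hp1
      have mB := hBm (L w.1 - r) (p.2.2 - r) w.2 p.1.2 h2 hp2
      rw [real_inner_comm] at mB
      have sk := skew w.1 p.1.1 w.2 p.1.2
      simp only [inner_sub_left, inner_sub_right, inner_add_right, inner_neg_right]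
        at mA mB sk ⊢
      linarith
    · intro h
      have star : ∀ x' a' g b', a' ∈ A x' → b' ∈ B g →
          0 ≤ ⟪w.1 - x', (-(L' w.2) + z) - a'⟫_ℝ + ⟪w.2 - b', (L w.1 - r) - g⟫_ℝ := by
        intro x' a' g b' ha hb
        have hq := h ((x', b'), (a' - z, g + r)) ⟨by simpa using ha, by simpa using hb⟩
        have sk := skew w.1 x' w.2 b'
        simp only [Set.mem_setOf_eq] at hq
        simp only [inner_sub_left, inner_sub_right, inner_add_right, inner_neg_right]
          at hq sk ⊢
        linarith
      constructor
      · refine hAmax w.1 (-(L' w.2) + z) ?_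
        intro y v hv
        by_contra hc
        push_neg at hc
        have hball : ∀ g b, b ∈ B g → (0:ℝ) ≤ ⟪(L w.1 - r) - g, w.2 - b⟫_ℝ := by
          intro g b hb
          rw [real_inner_comm]
          have := star y v g b hv hb
          linarith
        have hw2 : w.2 ∈ B (L w.1 - r) := hBmax _ _ hball
        have hst := star y v (L w.1 - r) w.2 hv hw2
        simp only [sub_self, inner_zero_left, add_zero] at hst
        linarith
      · refine hBmax (L w.1 - r) w.2 ?_
        intro g b hb
        by_contra hc
        push_neg at hc
        rw [real_inner_comm] at hc
        have hall : ∀ y v, v ∈ A y → (0:ℝ) ≤ ⟪w.1 - y, (-(L' w.2) + z) - v⟫_ℝ := by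
          intro y v hv
          have := star y v g b hv hb
          linarith
        have hw1 : -(L' w.2) + z ∈ A w.1 := hAmax _ _ hall
        have hst := star w.1 (-(L' w.2) + z) g b hw1 hb
        simp only [sub_self, inner_zero_left, zero_add] at hst
        linarith
  have hQc : ∀ p : (H × G) × (H × G), IsClosed (Q p) ∧ Convex ℝ (Q p) := by
    intro p
    have hlin : IsLinearMap ℝ fun w : H × G =>
        ⟪w.1, p.2.1 + L' p.1.2⟫_ℝ + ⟪w.2, p.2.2 - L p.1.1⟫_ℝ := by
      constructor
      · intro a b
        simp only [Prod.fst_add, Prod.snd_add, inner_add_left]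
        ring
      · intro c a
        simp only [Prod.smul_fst, Prod.smul_snd, real_inner_smul_left, smul_eq_mul]
        ring
    constructor
    · exact isClosed_le
        ((continuous_fst.inner continuous_const).add (continuous_snd.inner continuous_const))
        continuous_const
    · exact convex_halfSpace_le hlin _
  refine ⟨?_, ?_, hsub⟩
  · rw [hchar]
    exact isClosed_biInter fun p _ => (hQc p).1
  · rw [hchar]
    exact convex_iInter₂ fun p _ => (hQc p).2
end

section
/- Let H and G be real Hilbert spaces, let A : H → 2^H and B : G → 2^G be maximally monotone, let L : H → G be a bounded linear operator, let z ∈ H and r ∈ G. Let P = {x ∈ H : z ∈ Ax + L*(B(Lx − r))} and D = {v ∈ G : −r ∈ −L(A^{-1}(z − L*v)) + B^{-1}v}. Let K = H ⊕ G and define M : K → 2^K by M(x,v) = (−z + Ax) × (r + B^{-1}v) and S : K → K by S(x,v) = (L*v, −Lx). Then the following are equivalent: (a) z belongs to the range of the operator x ↦ Ax + L*(B(Lx − r)); (b) P ≠ ∅; (c) zer(M+S) ≠ ∅; (d) D ≠ ∅; (e) −r belongs to the range of the operator v ↦ −L(A^{-1}(z − L*v)) + B^{-1}v. -/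
open scoped InnerProductSpace

/-- The following are equivalent: (a) `z ∈ ran(A + L*∘B∘(L·−r))`; (b) the primal solution set
`P` is nonempty; (c) `zer(M+S)` is nonempty; (d) the dual solution set `D` is nonempty;
(e) `−r ∈ ran(−L∘A⁻¹∘(z−L*·) + B⁻¹)`. -/
theorem stmt_11 {H G : Type*} [NormedAddCommGroup H] [InnerProductSpace ℝ H] [CompleteSpace H]
    [NormedAddCommGroup G] [InnerProductSpace ℝ G] [CompleteSpace G]
    (A : H → Set H) (hA : MaxMonotone A)
    (B : G → Set G) (hB : MaxMonotone B)
    (L : H →L[ℝ] G) (z : H) (r : G)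
    (P : Set H)
    (hP : P = {x : H | ∃ u ∈ A x, ∃ w ∈ B (L x - r), z = u + ContinuousLinearMap.adjoint L w})
    (D : Set G)
    (hD : D = {v : G | ∃ s : H, z - ContinuousLinearMap.adjoint L v ∈ A s ∧
      ∃ g : G, v ∈ B g ∧ -r = -(L s) + g})
    (M : H × G → Set (H × G))
    (hM : M = fun w => {s : H × G | s.1 + z ∈ A w.1 ∧ w.2 ∈ B (s.2 - r)})
    (S : H × G → H × G)
    (hS : S = fun w => (ContinuousLinearMap.adjoint L w.2, -(L w.1)))
    (Z : Set (H × G))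
    (hZ : Z = {w : H × G | ∃ m ∈ M w, m + S w = 0}) :
    [(∃ x : H, ∃ u ∈ A x, ∃ w ∈ B (L x - r), z = u + ContinuousLinearMap.adjoint L w),
      P.Nonempty,
      Z.Nonempty,
      D.Nonempty,
      (∃ v : G, ∃ s : H, z - ContinuousLinearMap.adjoint L v ∈ A s ∧
        ∃ g : G, v ∈ B g ∧ -r = -(L s) + g)].TFAE := by
  subst hP hD hM hS hZ
  tfae_have 1 → 2 := by
    rintro ⟨x, hx⟩; exact ⟨x, hx⟩
  tfae_have 2 → 3 := by
    rintro ⟨x, u, hu, w, hw, hz⟩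
    refine ⟨(x, w), ⟨(-(ContinuousLinearMap.adjoint L w), L x), ⟨?_, by simpa using hw⟩, ?_⟩⟩
    · show -(ContinuousLinearMap.adjoint L w) + z ∈ A x
      have : -(ContinuousLinearMap.adjoint L w) + z = u := by rw [hz]; abel
      rw [this]; exact hu
    · simp [Prod.ext_iff]
  tfae_have 3 → 4 := by
    rintro ⟨⟨x, v⟩, ⟨m, ⟨hm1, hm2⟩, hsum⟩⟩
    have h1 : m.1 = -(ContinuousLinearMap.adjoint L v) := by
      have := congrArg Prod.fst hsum
      simpa [eq_neg_iff_add_eq_zero] using this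
    have h2 : m.2 = L x := by
      have := congrArg Prod.snd hsum
      simp only [Prod.snd_add] at this
      simpa [add_neg_eq_zero] using this
    refine ⟨v, x, ?_, L x - r, ?_, by abel⟩
    · have : z - ContinuousLinearMap.adjoint L v = m.1 + z := by rw [h1]; abel
      rw [this]; exact hm1
    · rw [← h2]; exact hm2
  tfae_have 4 → 5 := by
    rintro ⟨v, hv⟩; exact ⟨v, hv⟩
  tfae_have 5 → 1 := by
    rintro ⟨v, s, hs, g, hg, hr⟩
    have hgs : g = L s - r := by
      rw [sub_eq_add_neg, hr]; abel
    refine ⟨s, z - ContinuousLinearMap.adjoint L v, hs, v, ?_, by abel⟩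
    rw [← hgs]; exact hg
  tfae_finish
end

section
/- In the setting of the primal-dual forward-backward-forward algorithm — H, G real Hilbert spaces; A : H → 2^H and B : G → 2^G maximally monotone; L : H → G nonzero bounded linear; z ∈ H, r ∈ G with z in the range of x ↦ Ax + L*(B(Lx − r)); absolutely summable error sequences (a_{1,n}), (b_{1,n}), (c_{1,n}) in H and (a_{2,n}), (b_{2,n}), (c_{2,n}) in G; x_0 ∈ H, v_0 ∈ G, ε ∈ (0, 1/(‖L‖+1)), γ_n ∈ [ε, (1−ε)/‖L‖]; iteration y_{1,n} = x_n − γ_n(L*v_n + a_{1,n}), y_{2,n} = v_n + γ_n(L x_n + a_{2,n}), p_{1,n} = J_{γ_n A}(y_{1,n} + γ_n z) + b_{1,n}, p_{2,n} = J_{γ_n B^{-1}}(y_{2,n} − γ_n r) + b_{2,n}, q_{1,n} = p_{1,n} − γ_n(L*p_{2,n} + c_{1,n}), q_{2,n} = p_{2,n} + γ_n(L p_{1,n} + c_{2,n}), x_{n+1} = x_n − y_{1,n} + q_{1,n}, v_{n+1} = v_n − y_{2,n} + q_{2,n} — let x̄ be the weak limit of (x_n) (a primal solution) and v̄ the weak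 limit of (v_n) (a dual solution) with z − L*v̄ ∈ Ax̄ and v̄ ∈ B(Lx̄ − r). If A is uniformly monotone at x̄, then x_n → x̄ and p_{1,n} → x̄ in norm. -/
open scoped InnerProductSpace
open Filter Topology

/-!
In `H × G` with the `L²` norm the iteration is Tseng's forward–backward–forward method for
`M + S`, where `M (x, v) = (A x - z) × (B⁻¹ v + r)` is monotone and `S (x, v) = (L* v, -L x)` is
skew and `‖L‖`-Lipschitz; the Kuhn–Tucker point `w̄ = (x̄, v̄)` is a zero of `M + S`. With
`W n = (x n, v n)`, `P n` the exact resolvent step and `U n ∈ M (P n)`, the Fejér estimate of the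
method, perturbed by the summable errors, makes `‖W n - P n‖²` and `⟪P n - w̄, U n + S w̄⟫`
summable. Uniform monotonicity of `A` at `x̄` bounds the latter below by `φ ‖x̄ - P₁ n‖`, so the
primal part of `P n` converges to `x̄` in norm, and with it `p₁ n` and `x n`.
-/

open WithLp

section RealSequences

variable {u d β : ℕ → ℝ}

lemma sum_range_add_le_add_sum_range (h : ∀ n, u (n + 1) + d n ≤ u n + β n) (N : ℕ) :
    ∑ k ∈ Finset.range N, d k + u N ≤ u 0 + ∑ k ∈ Finset.range N, β k := by
  induction N with
  | zero => simp
  | succ N ih =>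
    rw [Finset.sum_range_succ, Finset.sum_range_succ]
    linarith [h N]

lemma le_add_tsum_of_le_add_s14 (hβ : ∀ n, 0 ≤ β n) (hβs : Summable β)
    (h : ∀ n, u (n + 1) ≤ u n + β n) (n : ℕ) : u n ≤ u 0 + ∑' k, β k := by
  have := sum_range_add_le_add_sum_range (d := fun _ => 0) (by simpa using h) n
  simp only [Finset.sum_const_zero, zero_add] at this
  linarith [hβs.sum_le_tsum (Finset.range n) (fun k _ => hβ k)]

lemma summable_of_add_le_add (hu : ∀ n, 0 ≤ u n) (hd : ∀ n, 0 ≤ d n) (hβ : ∀ n, 0 ≤ β n)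
    (hβs : Summable β) (h : ∀ n, u (n + 1) + d n ≤ u n + β n) : Summable d :=
  summable_of_sum_range_le (c := u 0 + ∑' k, β k) hd fun N => by
    linarith [sum_range_add_le_add_sum_range h N, hu N,
      hβs.sum_le_tsum (Finset.range N) (fun k _ => hβ k)]

lemma summable_of_sq_add_le_sq {e q η : ℕ → ℝ} (he : ∀ n, 0 ≤ e n) (hq : ∀ n, 0 ≤ q n)
    (hd : ∀ n, 0 ≤ d n) (hη : ∀ n, 0 ≤ η n) (hηs : Summable η)
    (hqd : ∀ n, q n ^ 2 + d n ≤ (e n + η n) ^ 2) (hnext : ∀ n, e (n + 1) ≤ q n + η n) :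
    Summable d := by
  have hqe : ∀ n, q n ≤ e n + η n := fun n =>
    (pow_le_pow_iff_left₀ (hq n) (add_nonneg (he n) (hη n)) two_ne_zero).1
      (by linarith [hd n, hqd n])
  set C := e 0 + ∑' k, 2 * η k
  have heC : ∀ n, e n ≤ C :=
    le_add_tsum_of_le_add_s14 (fun n => by linarith [hη n]) (hηs.mul_left 2)
      fun n => by linarith [hnext n, hqe n]
  have hηle : ∀ n, η n ≤ ∑' k, η k := fun n => hηs.le_tsum n fun k _ => hη k
  refine summable_of_add_le_add (u := fun n => e n ^ 2) (β := fun n => 4 * (C + ∑' k, η k) * η n)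
    (fun n => sq_nonneg _) hd (fun n => ?_) (hηs.mul_left _) fun n => ?_
  · have : 0 ≤ ∑' k, η k := tsum_nonneg hη
    exact mul_nonneg (by linarith [he 0, heC 0]) (hη n)
  · have h1 : e (n + 1) ^ 2 ≤ (q n + η n) ^ 2 := pow_le_pow_left₀ (he _) (hnext n) 2
    nlinarith [hqd n, hqe n, heC n, hηle n, hη n, he n, hq n]

lemma tendsto_zero_of_tendsto_comp_zero {φ : ℝ → ℝ}
    (hφ : ∀ s t, 0 ≤ s → s ≤ t → φ s ≤ φ t) (hφpos : ∀ t, 0 < t → 0 < φ t)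
    {ι : Type*} {l : Filter ι} {t : ι → ℝ} (ht : ∀ i, 0 ≤ t i)
    (h : Tendsto (fun i => φ (t i)) l (𝓝 0)) : Tendsto t l (𝓝 0) := by
  rw [Metric.tendsto_nhds] at h ⊢
  intro δ hδ
  filter_upwards [h (φ δ) (hφpos δ hδ)] with i hi
  rw [Real.dist_0_eq_abs, abs_of_nonneg (ht i)]
  by_contra! hle
  have := hφ δ (t i) hδ.le hle
  rw [Real.dist_0_eq_abs] at hi
  linarith [le_abs_self (φ (t i))]

end RealSequences

section FBFStep

variable {E : Type*} [NormedAddCommGroup E] [InnerProductSpace ℝ E]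
  {S : E →L[ℝ] E} {γ : ℝ} {W P U a wb : E}

lemma fbf_norm_sq_eq (hskew : ∀ w, ⟪w, S w⟫_ℝ = 0) (hP : P = W - γ • (S W + U) - a) :
    ‖P + γ • S (W - P) - wb‖ ^ 2 = ‖W - wb‖ ^ 2 - ‖P - W‖ ^ 2 + γ ^ 2 * ‖S (W - P)‖ ^ 2
      - 2 * γ * ⟪P - wb, U + S wb⟫_ℝ - 2 * ⟪P - wb, a⟫_ℝ := by
  have hQ : P + γ • S (W - P) - wb = (P - wb) + γ • S (W - P) := by abel
  have hW : W - wb = (P - wb) - (P - W) := by abel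
  have hPW : P - W = -(γ • (S W + U) + a) := by rw [hP]; abel
  have hSP : ⟪P - wb, S P⟫_ℝ = ⟪P - wb, S wb⟫_ℝ := by
    have := hskew (P - wb)
    rw [map_sub, inner_sub_right] at this
    linarith
  rw [hQ, hW, norm_add_sq_real, norm_sub_sq_real (P - wb), norm_smul, mul_pow,
    Real.norm_eq_abs, sq_abs]
  simp only [hPW, inner_neg_right, inner_add_right, inner_smul_right, map_sub, inner_sub_right,
    hSP]
  ring

lemma fbf_norm_sub_le (hγ : 0 ≤ γ) (hγS : γ * ‖S‖ ≤ 1) (hP : P = W - γ • (S W + U) - a)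
    (hmono : 0 ≤ ⟪P - wb, U + S wb⟫_ℝ) :
    ‖P - wb‖ ≤ 2 * ‖W - wb‖ + ‖a‖ := by
  set R := (W - wb) - γ • S (W - wb) - a
  have hR : P - wb = R - γ • (U + S wb) := by
    simp only [R, hP, map_sub]; module
  have hRle : ‖R‖ ≤ 2 * ‖W - wb‖ + ‖a‖ := by
    have hSle : ‖γ • S (W - wb)‖ ≤ ‖W - wb‖ := by
      rw [norm_smul, Real.norm_of_nonneg hγ]
      calc γ * ‖S (W - wb)‖ ≤ γ * (‖S‖ * ‖W - wb‖) := by gcongr; exact S.le_opNorm _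
        _ = γ * ‖S‖ * ‖W - wb‖ := by ring
        _ ≤ 1 * ‖W - wb‖ := by gcongr
        _ = ‖W - wb‖ := one_mul _
    calc ‖R‖ ≤ ‖W - wb‖ + ‖γ • S (W - wb)‖ + ‖a‖ := norm_sub_le_of_le (norm_sub_le _ _) le_rfl
      _ ≤ 2 * ‖W - wb‖ + ‖a‖ := by linarith
  have hsq : ‖P - wb‖ ^ 2 ≤ ‖P - wb‖ * ‖R‖ := by
    calc ‖P - wb‖ ^ 2 = ⟪P - wb, R⟫_ℝ - γ * ⟪P - wb, U + S wb⟫_ℝ := by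
          rw [← real_inner_self_eq_norm_sq, ← real_inner_smul_right, ← inner_sub_right, ← hR]
      _ ≤ ⟪P - wb, R⟫_ℝ := by linarith [mul_nonneg hγ hmono]
      _ ≤ ‖P - wb‖ * ‖R‖ := real_inner_le_norm _ _
  nlinarith [norm_nonneg (P - wb), norm_nonneg R]

lemma fbf_norm_sq_add_le (hskew : ∀ w, ⟪w, S w⟫_ℝ = 0) {ε : ℝ} (hε : 0 < ε) (hεγ : ε ≤ γ)
    (hγS : γ * ‖S‖ ≤ 1 - ε) (hP : P = W - γ • (S W + U) - a)
    (hmono : 0 ≤ ⟪P - wb, U + S wb⟫_ℝ) :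
    ‖P + γ • S (W - P) - wb‖ ^ 2 + ((1 - (1 - ε) ^ 2) * ‖P - W‖ ^ 2
        + 2 * ε * ⟪P - wb, U + S wb⟫_ℝ) ≤ (‖W - wb‖ + 2 * ‖a‖) ^ 2 := by
  have hγ : 0 ≤ γ := hε.le.trans hεγ
  have hSPW : γ * ‖S (W - P)‖ ≤ (1 - ε) * ‖P - W‖ := by
    calc γ * ‖S (W - P)‖ ≤ γ * (‖S‖ * ‖W - P‖) := by gcongr; exact S.le_opNorm _
      _ = γ * ‖S‖ * ‖P - W‖ := by rw [norm_sub_rev]; ring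
      _ ≤ (1 - ε) * ‖P - W‖ := by gcongr
  have hSPW_sq : γ ^ 2 * ‖S (W - P)‖ ^ 2 ≤ (1 - ε) ^ 2 * ‖P - W‖ ^ 2 := by
    rw [← mul_pow, ← mul_pow]
    exact pow_le_pow_left₀ (by positivity) hSPW 2
  have hPa : -⟪P - wb, a⟫_ℝ ≤ (2 * ‖W - wb‖ + ‖a‖) * ‖a‖ := by
    calc -⟪P - wb, a⟫_ℝ ≤ ‖P - wb‖ * ‖a‖ := by
          rw [← inner_neg_right, ← norm_neg a]; exact real_inner_le_norm _ _
      _ ≤ (2 * ‖W - wb‖ + ‖a‖) * ‖a‖ := by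
          gcongr; exact fbf_norm_sub_le hγ (by linarith) hP hmono
  rw [fbf_norm_sq_eq hskew hP]
  nlinarith [mul_le_mul_of_nonneg_right hεγ hmono, norm_nonneg (W - wb), norm_nonneg a]

end FBFStep

section FBF

variable {E : Type*} [NormedAddCommGroup E] [InnerProductSpace ℝ E] {S : E →L[ℝ] E}

theorem fbf_tendsto (hskew : ∀ w, ⟪w, S w⟫_ℝ = 0) {ε : ℝ} (hε : 0 < ε) {γ : ℕ → ℝ}
    (hεγ : ∀ n, ε ≤ γ n) (hγS : ∀ n, γ n * ‖S‖ ≤ 1 - ε) {W P U a e : ℕ → E} {wb : E}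
    (hP : ∀ n, P n = W n - γ n • (S (W n) + U n) - a n)
    (hW : ∀ n, W (n + 1) = P n + γ n • S (W n - P n) + e n)
    (hmono : ∀ n, 0 ≤ ⟪P n - wb, U n + S wb⟫_ℝ)
    (ha : Summable fun n => ‖a n‖) (he : Summable fun n => ‖e n‖) :
    Tendsto (fun n => W n - P n) atTop (𝓝 0) ∧
      Tendsto (fun n => ⟪P n - wb, U n + S wb⟫_ℝ) atTop (𝓝 0) := by
  set τ := 1 - (1 - ε) ^ 2
  have hε1 : ε ≤ 1 := by nlinarith [hγS 0, hε.le.trans (hεγ 0), norm_nonneg S]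
  have hτ : 0 < τ := by nlinarith
  set d := fun n => τ * ‖P n - W n‖ ^ 2 + 2 * ε * ⟪P n - wb, U n + S wb⟫_ℝ
  have hd : ∀ n, 0 ≤ d n := fun n => by have := hmono n; positivity
  have hd0 : Tendsto d atTop (𝓝 0) := by
    refine (summable_of_sq_add_le_sq (e := fun n => ‖W n - wb‖)
      (q := fun n => ‖P n + γ n • S (W n - P n) - wb‖) (η := fun n => 2 * ‖a n‖ + ‖e n‖)
      (fun n => norm_nonneg _) (fun n => norm_nonneg _) hd (fun n => by positivity)
      ((ha.mul_left 2).add he) (fun n => ?_) (fun n => ?_)).tendsto_atTop_zero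
    · calc _ ≤ (‖W n - wb‖ + 2 * ‖a n‖) ^ 2 :=
            fbf_norm_sq_add_le hskew hε (hεγ n) (hγS n) (hP n) (hmono n)
        _ ≤ _ := by gcongr; linarith [norm_nonneg (e n)]
    · calc ‖W (n + 1) - wb‖ = ‖(P n + γ n • S (W n - P n) - wb) + e n‖ := by
            rw [hW]; congr 1; abel
        _ ≤ _ := norm_add_le _ _
        _ ≤ _ := by linarith [norm_nonneg (a n)]
  constructor
  · have hsq : Tendsto (fun n => ‖W n - P n‖ ^ 2) atTop (𝓝 0) := by
      refine squeeze_zero (fun n => sq_nonneg _) (fun n => ?_) (by simpa using hd0.div_const τ)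
      rw [le_div_iff₀ hτ, norm_sub_rev]
      nlinarith [mul_nonneg hε.le (hmono n)]
    exact tendsto_zero_iff_norm_tendsto_zero.2 <|
      tendsto_zero_of_tendsto_comp_zero (φ := fun t => t ^ 2) (fun s t hs hst => by gcongr)
        (fun t ht => by positivity) (fun n => norm_nonneg _) hsq
  · refine squeeze_zero hmono (fun n => ?_) (by simpa using hd0.div_const (2 * ε))
    rw [le_div_iff₀ (by positivity)]
    nlinarith [mul_nonneg hτ.le (sq_nonneg ‖P n - W n‖)]

end FBF

lemma WithLp.prod_ext {p : ENNReal} {α β : Type*} {x y : WithLp p (α × β)} (h₁ : x.fst = y.fst)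
    (h₂ : x.snd = y.snd) : x = y :=
  (WithLp.ext_iff p).2 (Prod.ext h₁ h₂)

lemma WithLp.norm_toLp_le {α β : Type*} [SeminormedAddCommGroup α] [SeminormedAddCommGroup β]
    (x : α) (y : β) : ‖toLp 2 (x, y)‖ ≤ ‖x‖ + ‖y‖ := by
  calc ‖toLp 2 (x, y)‖ = ‖toLp 2 (x, (0 : β)) + toLp 2 ((0 : α), y)‖ := by simp [← toLp_add]
    _ ≤ ‖toLp 2 (x, (0 : β))‖ + ‖toLp 2 ((0 : α), y)‖ := norm_add_le _ _
    _ = ‖x‖ + ‖y‖ := by rw [norm_toLp_fst, norm_toLp_snd]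

section Summability

variable {ι E F : Type*} [SeminormedAddCommGroup E] [SeminormedAddCommGroup F] {f g : ι → E}

lemma summable_norm_add (hf : Summable fun i => ‖f i‖) (hg : Summable fun i => ‖g i‖) :
    Summable fun i => ‖f i + g i‖ :=
  (hf.add hg).of_nonneg_of_le (fun _ => norm_nonneg _) fun _ => norm_add_le _ _

lemma summable_norm_sub (hf : Summable fun i => ‖f i‖) (hg : Summable fun i => ‖g i‖) :
    Summable fun i => ‖f i - g i‖ :=
  (hf.add hg).of_nonneg_of_le (fun _ => norm_nonneg _) fun _ => norm_sub_le _ _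

lemma summable_norm_smul_of_abs_le [NormedSpace ℝ E] {c : ι → ℝ} {C : ℝ} (hc : ∀ i, |c i| ≤ C)
    (hf : Summable fun i => ‖f i‖) : Summable fun i => ‖c i • f i‖ :=
  (hf.mul_left C).of_nonneg_of_le (fun _ => norm_nonneg _) fun i => by
    rw [norm_smul, Real.norm_eq_abs]; exact mul_le_mul_of_nonneg_right (hc i) (norm_nonneg _)

lemma summable_norm_map {𝕜 : Type*} [NontriviallyNormedField 𝕜] [NormedSpace 𝕜 E]
    [NormedSpace 𝕜 F] (T : E →L[𝕜] F) (hf : Summable fun i => ‖f i‖) :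
    Summable fun i => ‖T (f i)‖ :=
  (hf.mul_left ‖T‖).of_nonneg_of_le (fun _ => norm_nonneg _) fun _ => T.le_opNorm _

lemma summable_norm_toLp {k : ι → F} (hf : Summable fun i => ‖f i‖)
    (hk : Summable fun i => ‖k i‖) : Summable fun i => ‖toLp 2 (f i, k i)‖ :=
  (hf.add hk).of_nonneg_of_le (fun _ => norm_nonneg _) fun _ => WithLp.norm_toLp_le _ _

end Summability

lemma IsResolvent.exists_of_apply_eq {E : Type*} [AddCommGroup E] [Module ℝ E] {γ : ℝ}
    {A : E → Set E} {J : E → E} (hJ : IsResolvent γ A J) {w p : E} (hp : J w = p) :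
    ∃ u ∈ A p, w = p + γ • u :=
  hp ▸ hJ w

section PrimalDual

variable {H G : Type*} [NormedAddCommGroup H] [InnerProductSpace ℝ H] [CompleteSpace H]
  [NormedAddCommGroup G] [InnerProductSpace ℝ G] [CompleteSpace G] (L : H →L[ℝ] G)

noncomputable def skewOp : WithLp 2 (H × G) →L[ℝ] WithLp 2 (H × G) :=
  (prodContinuousLinearEquiv 2 ℝ H G).symm.toContinuousLinearMap ∘L
    ((L.adjoint ∘L sndL 2 ℝ H G).prod (-(L ∘L fstL 2 ℝ H G)))

@[simp] lemma skewOp_apply (w : WithLp 2 (H × G)) :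
    skewOp L w = toLp 2 (L.adjoint w.snd, -L w.fst) := rfl

lemma inner_skewOp_self (w : WithLp 2 (H × G)) : ⟪w, skewOp L w⟫_ℝ = 0 := by
  simp [ContinuousLinearMap.adjoint_inner_right, real_inner_comm]

lemma opNorm_skewOp_le : ‖skewOp L‖ ≤ ‖L‖ := by
  refine (skewOp L).opNorm_le_bound (norm_nonneg L) fun w => ?_
  refine le_of_pow_le_pow_left₀ two_ne_zero (by positivity) ?_
  have h₁ : ‖L.adjoint w.snd‖ ≤ ‖L‖ * ‖w.snd‖ := by
    simpa using L.adjoint.le_opNorm w.snd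
  have h₂ : ‖L w.fst‖ ≤ ‖L‖ * ‖w.fst‖ := L.le_opNorm w.fst
  rw [skewOp_apply, prod_norm_sq_eq_of_L2, mul_pow, prod_norm_sq_eq_of_L2 w]
  simp only [toLp_fst, toLp_snd, norm_neg]
  nlinarith [pow_le_pow_left₀ (norm_nonneg _) h₁ 2, pow_le_pow_left₀ (norm_nonneg _) h₂ 2]

variable {γ : ℝ} {x P₁ y₁ a₁ z u : H} {v P₂ y₂ a₂ g : G} {r : G}

lemma primalDual_forward (hy₁ : y₁ = x - γ • (L.adjoint v + a₁)) (hy₂ : y₂ = v + γ • (L x + a₂))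
    (hu : y₁ + γ • z = P₁ + γ • u) (hg : y₂ - γ • r = P₂ + γ • g) :
    toLp 2 (P₁, P₂) = toLp 2 (x, v) - γ • (skewOp L (toLp 2 (x, v)) + toLp 2 (u - z, g + r))
      - γ • toLp 2 (a₁, -a₂) := by
  subst hy₁ hy₂
  refine WithLp.prod_ext ?_ ?_ <;> simp
  · linear_combination (norm := module) -hu
  · linear_combination (norm := module) -hg

variable {x' p₁ q₁ b₁ c₁ : H} {v' p₂ q₂ b₂ c₂ : G}

lemma primalDual_next (hy₁ : y₁ = x - γ • (L.adjoint v + a₁)) (hy₂ : y₂ = v + γ • (L x + a₂))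
    (hq₁ : q₁ = p₁ - γ • (L.adjoint p₂ + c₁)) (hq₂ : q₂ = p₂ + γ • (L p₁ + c₂))
    (hx : x' = x - y₁ + q₁) (hv : v' = v - y₂ + q₂) :
    toLp 2 (x', v') = toLp 2 (p₁ - b₁, p₂ - b₂)
      + γ • skewOp L (toLp 2 (x, v) - toLp 2 (p₁ - b₁, p₂ - b₂))
      + (γ • (toLp 2 (a₁, -a₂) - skewOp L (toLp 2 (b₁, b₂)) - toLp 2 (c₁, -c₂))
        + toLp 2 (b₁, b₂)) := by
  subst hy₁ hy₂ hq₁ hq₂ hx hv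
  refine WithLp.prod_ext ?_ ?_ <;> simp only [map_sub, skewOp_apply] <;> simp <;> module

lemma primalDual_phi_le_inner {A : H → Set H} {B : G → Set G} (hB : MonotoneSV B) {φ : ℝ → ℝ}
    {xb : H} {vb : G} (hφ : ∀ w ∈ A xb, ∀ y u, u ∈ A y → φ ‖xb - y‖ ≤ ⟪xb - y, w - u⟫_ℝ)
    (hkt₁ : z - L.adjoint vb ∈ A xb) (hkt₂ : vb ∈ B (L xb - r)) (hu : u ∈ A P₁) (hg : P₂ ∈ B g) :
    φ ‖xb - P₁‖ ≤ ⟪toLp 2 (P₁, P₂) - toLp 2 (xb, vb),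
      toLp 2 (u - z, g + r) + skewOp L (toLp 2 (xb, vb))⟫_ℝ := by
  have h₁ := hφ _ hkt₁ _ _ hu
  have h₂ := hB _ _ _ _ hg hkt₂
  have e₁ : ⟪xb - P₁, z - L.adjoint vb - u⟫_ℝ = ⟪P₁ - xb, u - z + L.adjoint vb⟫_ℝ := by
    rw [← inner_neg_neg]; congr 1 <;> abel
  have e₂ : ⟪g - (L xb - r), P₂ - vb⟫_ℝ = ⟪P₂ - vb, g + r + -L xb⟫_ℝ := by
    rw [real_inner_comm]; congr 1; abel
  simp only [WithLp.prod_inner_apply, skewOp_apply, toLp_fst, toLp_snd, ← toLp_sub, ← toLp_add,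
    Prod.mk_sub_mk, Prod.mk_add_mk]
  linarith

end PrimalDual

theorem stmt_14_general {H G : Type*} [NormedAddCommGroup H] [InnerProductSpace ℝ H] [CompleteSpace H]
    [NormedAddCommGroup G] [InnerProductSpace ℝ G] [CompleteSpace G]
    (A : H → Set H)
    (B : G → Set G) (hB : MaxMonotone B)
    (L : H →L[ℝ] G) (hL : L ≠ 0) (z : H) (r : G)
    (a₁ b₁ c₁ : ℕ → H) (a₂ b₂ c₂ : ℕ → G)
    (ha₁ : Summable fun n => ‖a₁ n‖) (hb₁ : Summable fun n => ‖b₁ n‖)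
    (hc₁ : Summable fun n => ‖c₁ n‖)
    (ha₂ : Summable fun n => ‖a₂ n‖) (hb₂ : Summable fun n => ‖b₂ n‖)
    (hc₂ : Summable fun n => ‖c₂ n‖)
    (ε : ℝ) (hε : ε ∈ Set.Ioo (0:ℝ) (1 / (‖L‖ + 1)))
    (γ : ℕ → ℝ) (hγ : ∀ n, γ n ∈ Set.Icc ε ((1 - ε) / ‖L‖))
    (JA : ℕ → H → H) (hJA : ∀ n, IsResolvent (γ n) A (JA n))
    (JB : ℕ → G → G) (hJB : ∀ n, IsResolvent (γ n) (fun w => {g : G | w ∈ B g}) (JB n))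
    (x y₁ p₁ q₁ : ℕ → H) (v y₂ p₂ q₂ : ℕ → G)
    (hy₁ : ∀ n, y₁ n = x n - γ n • (ContinuousLinearMap.adjoint L (v n) + a₁ n))
    (hy₂ : ∀ n, y₂ n = v n + γ n • (L (x n) + a₂ n))
    (hp₁ : ∀ n, p₁ n = JA n (y₁ n + γ n • z) + b₁ n)
    (hp₂ : ∀ n, p₂ n = JB n (y₂ n - γ n • r) + b₂ n)
    (hq₁ : ∀ n, q₁ n = p₁ n - γ n • (ContinuousLinearMap.adjoint L (p₂ n) + c₁ n))
    (hq₂ : ∀ n, q₂ n = p₂ n + γ n • (L (p₁ n) + c₂ n))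
    (hx : ∀ n, x (n + 1) = x n - y₁ n + q₁ n)
    (hv : ∀ n, v (n + 1) = v n - y₂ n + q₂ n)
    (xb : H) (vb : G)
    (hkt₁ : z - ContinuousLinearMap.adjoint L vb ∈ A xb)
    (hkt₂ : vb ∈ B (L xb - r))
    (hunif : UnifMonoAt A xb) :
    Filter.Tendsto x Filter.atTop (nhds xb) ∧
      Filter.Tendsto p₁ Filter.atTop (nhds xb) := by
  obtain ⟨φ, hφmono, hφ0, hφpos, hφ⟩ := hunif
  have hφnonneg : ∀ t, 0 ≤ t → 0 ≤ φ t := fun t ht => hφ0 ▸ hφmono 0 t le_rfl ht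
  have hγpos : ∀ n, 0 < γ n := fun n => hε.1.trans_le (hγ n).1
  have hγS : ∀ n, γ n * ‖skewOp L‖ ≤ 1 - ε := fun n =>
    (mul_le_mul_of_nonneg_left (opNorm_skewOp_le L) (hγpos n).le).trans
      ((le_div_iff₀ (norm_pos_iff.2 hL)).1 (hγ n).2)
  have hγabs : ∀ n, |γ n| ≤ (1 - ε) / ‖L‖ := fun n => by
    rw [abs_of_pos (hγpos n)]; exact (hγ n).2
  choose u hu hu_eq using fun n => (hJA n).exists_of_apply_eq (eq_sub_of_add_eq (hp₁ n).symm)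
  choose g hg hg_eq using fun n => (hJB n).exists_of_apply_eq (eq_sub_of_add_eq (hp₂ n).symm)
  have hφD := fun n => primalDual_phi_le_inner L hB.1 hφ hkt₁ hkt₂ (hu n) (hg n)
  have ha := summable_norm_toLp (k := fun n => -a₂ n) ha₁ (by simpa using ha₂)
  have hb := summable_norm_toLp hb₁ hb₂
  have hc := summable_norm_toLp (k := fun n => -c₂ n) hc₁ (by simpa using hc₂)
  obtain ⟨hWP, hD⟩ := fbf_tendsto (inner_skewOp_self L) hε.1 (fun n => (hγ n).1) hγS
    (fun n => primalDual_forward L (hy₁ n) (hy₂ n) (hu_eq n) (hg_eq n))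
    (fun n => primalDual_next L (hy₁ n) (hy₂ n) (hq₁ n) (hq₂ n) (hx n) (hv n))
    (fun n => (hφnonneg _ (norm_nonneg _)).trans (hφD n))
    (summable_norm_smul_of_abs_le hγabs ha)
    (summable_norm_add (summable_norm_smul_of_abs_le hγabs
      (summable_norm_sub (summable_norm_sub ha (summable_norm_map _ hb)) hc)) hb)
  have hP₁ : Tendsto (fun n => p₁ n - b₁ n) atTop (𝓝 xb) := by
    have := tendsto_zero_of_tendsto_comp_zero hφmono hφpos (fun n => norm_nonneg _)
      (squeeze_zero (fun n => hφnonneg _ (norm_nonneg _)) hφD hD)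
    rw [tendsto_iff_norm_sub_tendsto_zero]
    simpa only [norm_sub_rev] using this
  have hb₁0 : Tendsto b₁ atTop (𝓝 0) :=
    tendsto_zero_iff_norm_tendsto_zero.2 hb₁.tendsto_atTop_zero
  have hx₁ : Tendsto (fun n => x n - (p₁ n - b₁ n)) atTop (𝓝 0) :=
    ((WithLp.continuous_fst 2 H G).tendsto 0).comp hWP
  exact ⟨by simpa using hx₁.add hP₁, by simpa using hP₁.add hb₁0⟩

theorem stmt_14 {H G : Type*} [NormedAddCommGroup H] [InnerProductSpace ℝ H] [CompleteSpace H]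
    [NormedAddCommGroup G] [InnerProductSpace ℝ G] [CompleteSpace G]
    (A : H → Set H) (hA : MaxMonotone A)
    (B : G → Set G) (hB : MaxMonotone B)
    (L : H →L[ℝ] G) (hL : L ≠ 0) (z : H) (r : G)
    (hran : ∃ x : H, ∃ u ∈ A x, ∃ w ∈ B (L x - r),
      z = u + ContinuousLinearMap.adjoint L w)
    (a₁ b₁ c₁ : ℕ → H) (a₂ b₂ c₂ : ℕ → G)
    (ha₁ : Summable fun n => ‖a₁ n‖) (hb₁ : Summable fun n => ‖b₁ n‖)
    (hc₁ : Summable fun n => ‖c₁ n‖)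
    (ha₂ : Summable fun n => ‖a₂ n‖) (hb₂ : Summable fun n => ‖b₂ n‖)
    (hc₂ : Summable fun n => ‖c₂ n‖)
    (ε : ℝ) (hε : ε ∈ Set.Ioo (0:ℝ) (1 / (‖L‖ + 1)))
    (γ : ℕ → ℝ) (hγ : ∀ n, γ n ∈ Set.Icc ε ((1 - ε) / ‖L‖))
    (JA : ℕ → H → H) (hJA : ∀ n, IsResolvent (γ n) A (JA n))
    (JB : ℕ → G → G) (hJB : ∀ n, IsResolvent (γ n) (fun w => {g : G | w ∈ B g}) (JB n))
    (x y₁ p₁ q₁ : ℕ → H) (v y₂ p₂ q₂ : ℕ → G)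
    (hy₁ : ∀ n, y₁ n = x n - γ n • (ContinuousLinearMap.adjoint L (v n) + a₁ n))
    (hy₂ : ∀ n, y₂ n = v n + γ n • (L (x n) + a₂ n))
    (hp₁ : ∀ n, p₁ n = JA n (y₁ n + γ n • z) + b₁ n)
    (hp₂ : ∀ n, p₂ n = JB n (y₂ n - γ n • r) + b₂ n)
    (hq₁ : ∀ n, q₁ n = p₁ n - γ n • (ContinuousLinearMap.adjoint L (p₂ n) + c₁ n))
    (hq₂ : ∀ n, q₂ n = p₂ n + γ n • (L (p₁ n) + c₂ n))
    (hx : ∀ n, x (n + 1) = x n - y₁ n + q₁ n)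
    (hv : ∀ n, v (n + 1) = v n - y₂ n + q₂ n)
    (xb : H) (vb : G)
    (hxweak : WeakTendsto x xb) (hvweak : WeakTendsto v vb)
    (hprimal : ∃ u ∈ A xb, ∃ w ∈ B (L xb - r), z = u + ContinuousLinearMap.adjoint L w)
    (hdual : ∃ s : H, z - ContinuousLinearMap.adjoint L vb ∈ A s ∧
      ∃ g : G, vb ∈ B g ∧ -r = -(L s) + g)
    (hkt₁ : z - ContinuousLinearMap.adjoint L vb ∈ A xb)
    (hkt₂ : vb ∈ B (L xb - r))
    (hunif : UnifMonoAt A xb) :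
    Filter.Tendsto x Filter.atTop (nhds xb) ∧
      Filter.Tendsto p₁ Filter.atTop (nhds xb) :=
  stmt_14_general A B hB L hL z r a₁ b₁ c₁ a₂ b₂ c₂ ha₁ hb₁ hc₁ ha₂ hb₂ hc₂ ε hε γ hγ JA hJA JB hJB
    x y₁ p₁ q₁ v y₂ p₂ q₂ hy₁ hy₂ hp₁ hp₂ hq₁ hq₂ hx hv xb vb hkt₁ hkt₂ hunif
end

section
/- In the setting of the primal-dual forward-backward-forward algorithm — H, G real Hilbert spaces; A : H → 2^H and B : G → 2^G maximally monotone; L : H → G nonzero bounded linear; z ∈ H, r ∈ G with z in the range of x ↦ Ax + L*(B(Lx − r)); absolutely summable error sequences (a_{1,n}), (b_{1,n}), (c_{1,n}) in H and (a_{2,n}), (b_{2,n}), (c_{2,n}) in G; x_0 ∈ H, v_0 ∈ G, ε ∈ (0, 1/(‖L‖+1)), γ_n ∈ [ε, (1−ε)/‖L‖]; iteration y_{1,n} = x_n − γ_n(L*v_n + a_{1,n}), y_{2,n} = v_n + γ_n(L x_n + a_{2,n}), p_{1,n} = J_{γ_n A}(y_{1,n} + γ_n z) + b_{1,n}, p_{2,n}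 = J_{γ_n B^{-1}}(y_{2,n} − γ_n r) + b_{2,n}, q_{1,n} = p_{1,n} − γ_n(L*p_{2,n} + c_{1,n}), q_{2,n} = p_{2,n} + γ_n(L p_{1,n} + c_{2,n}), x_{n+1} = x_n − y_{1,n} + q_{1,n}, v_{n+1} = v_n − y_{2,n} + q_{2,n} — let x̄ be the weak limit of (x_n) (a primal solution) and v̄ the weak limit of (v_n) (a dual solution) with z − L*v̄ ∈ Ax̄ and v̄ ∈ B(Lx̄ − r). If B^{-1} is uniformly monotone at v̄, then v_n → v̄ and p_{2,n} → v̄ in norm. -/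
open scoped InnerProductSpace
open Filter Topology

/-!
Write `w = (x, v)` and `S (x, v) = (L† v, -L x)`, a skew operator of norm `‖L‖`. Up to summable
errors, one step of the iteration is the exact forward-backward-forward step
`w ↦ P + γ S (w - P)`, where `P = (P₁, P₂)` is the resolvent point computed without the errors:
the resolvents are nonexpansive, so the deviation is controlled by the error terms. For the exact
step, skewness of `S` and monotonicity at the Kuhn–Tucker point `w̄ = (xb, vb)` give
`‖w⁺ - w̄‖² + (1 - γ² ‖L‖²) ‖w - P‖² + 2 γ ⟪vb - P₂, (L xb - r) - uB⟫ ≤ ‖w - w̄‖²`,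
with `P₂ ∈ B uB`, and the last inner product dominates `φ ‖vb - P₂‖` by uniform monotonicity of
`B⁻¹` at `vb`. A quasi-Fejér argument makes these decrements summable, so `‖v - P₂‖ → 0` and
`P₂ → vb`; the errors in `p₂` vanish as well.
-/

open scoped InnerProduct

theorem le_add_tsum_of_succ_le_add {D ρ : ℕ → ℝ} (hρ₀ : ∀ n, 0 ≤ ρ n) (hρ : Summable ρ)
    (h : ∀ n, D (n + 1) ≤ D n + ρ n) (n : ℕ) : D n ≤ D 0 + ∑' k, ρ k := by
  have hpartial : D n ≤ D 0 + ∑ k ∈ Finset.range n, ρ k := by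
    induction n with
    | zero => simp
    | succ m ih => rw [Finset.sum_range_succ]; linarith [h m]
  linarith [hρ.sum_le_tsum (Finset.range n) fun k _ => hρ₀ k]

theorem summable_of_sq_succ_add_le {D U ρ : ℕ → ℝ} (hD : ∀ n, 0 ≤ D n) (hU : ∀ n, 0 ≤ U n)
    (hρ₀ : ∀ n, 0 ≤ ρ n) (hρ : Summable ρ) (h : ∀ n, D (n + 1) ^ 2 + U n ≤ (D n + ρ n) ^ 2) :
    Summable U := by
  have hstep : ∀ n, D (n + 1) ≤ D n + ρ n := fun n =>
    (pow_le_pow_iff_left₀ (hD _) (add_nonneg (hD n) (hρ₀ n)) two_ne_zero).1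
      (by linarith [h n, hU n])
  set C := D 0 + ∑' k, ρ k
  set M := 2 * C + ∑' k, ρ k
  have hU_le : ∀ n, U n ≤ (D n ^ 2 - D (n + 1) ^ 2) + M * ρ n := fun n => by
    have hDC := le_add_tsum_of_succ_le_add hρ₀ hρ hstep n
    have hρT := hρ.le_tsum n fun k _ => hρ₀ k
    nlinarith [h n, hρ₀ n]
  refine summable_of_sum_range_le (c := D 0 ^ 2 + M * ∑' k, ρ k) hU fun n => ?_
  calc ∑ k ∈ Finset.range n, U k
      ≤ ∑ k ∈ Finset.range n, ((D k ^ 2 - D (k + 1) ^ 2) + M * ρ k) :=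
        Finset.sum_le_sum fun k _ => hU_le k
    _ = D 0 ^ 2 - D n ^ 2 + M * ∑ k ∈ Finset.range n, ρ k := by
        rw [Finset.sum_add_distrib, Finset.sum_range_sub', Finset.mul_sum]
    _ ≤ D 0 ^ 2 + M * ∑' k, ρ k := by
        have hM : 0 ≤ M := by linarith [hD 0, (tsum_nonneg hρ₀ : 0 ≤ ∑' k, ρ k)]
        gcongr
        · nlinarith
        · exact hρ.sum_le_tsum _ fun k _ => hρ₀ k

theorem summable_of_norm_sq_add_le {E : Type*} [SeminormedAddCommGroup E] {w w' : ℕ → E}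
    {U : ℕ → ℝ} (hU : ∀ n, 0 ≤ U n) (hfejer : ∀ n, ‖w' n‖ ^ 2 + U n ≤ ‖w n‖ ^ 2)
    (herr : Summable fun n => ‖w (n + 1) - w' n‖) : Summable U := by
  refine summable_of_sq_succ_add_le (fun n => norm_nonneg (w n)) hU (fun n => norm_nonneg _)
    herr fun n => ?_
  have hw' : ‖w' n‖ ≤ ‖w n‖ :=
    (pow_le_pow_iff_left₀ (norm_nonneg _) (norm_nonneg _) two_ne_zero).1
      (by linarith [hfejer n, hU n])
  have htri : ‖w (n + 1)‖ ≤ ‖w' n‖ + ‖w (n + 1) - w' n‖ := norm_le_insert' _ _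
  nlinarith [hfejer n, norm_nonneg (w (n + 1)), norm_nonneg (w (n + 1) - w' n)]

theorem summable_of_norm_sq_add_norm_sq_add_le {α β : Type*} [SeminormedAddCommGroup α]
    [SeminormedAddCommGroup β] {x x' : ℕ → α} {v v' : ℕ → β} {xb : α} {vb : β} {U : ℕ → ℝ}
    (hU : ∀ n, 0 ≤ U n)
    (hfejer : ∀ n, ‖x' n - xb‖ ^ 2 + ‖v' n - vb‖ ^ 2 + U n ≤ ‖x n - xb‖ ^ 2 + ‖v n - vb‖ ^ 2)
    (herr : Summable fun n => ‖x (n + 1) - x' n‖ + ‖v (n + 1) - v' n‖) : Summable U := by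
  refine summable_of_norm_sq_add_le (E := WithLp 2 (α × β))
    (w := fun n => WithLp.toLp 2 (x n - xb, v n - vb))
    (w' := fun n => WithLp.toLp 2 (x' n - xb, v' n - vb)) hU
    (fun n => by
      simpa only [WithLp.prod_norm_sq_eq_of_L2, WithLp.toLp_fst, WithLp.toLp_snd] using hfejer n)
    ?_
  refine herr.of_nonneg_of_le (fun n => norm_nonneg _) fun n => ?_
  rw [← WithLp.toLp_sub, Prod.mk_sub_mk, sub_sub_sub_cancel_right, sub_sub_sub_cancel_right,
    WithLp.prod_norm_eq_of_L2, Real.sqrt_le_iff]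
  constructor
  · positivity
  · simp only [WithLp.toLp_fst, WithLp.toLp_snd]
    nlinarith [norm_nonneg (x (n + 1) - x' n), norm_nonneg (v (n + 1) - v' n)]

theorem tendsto_zero_of_modulus_le {φ : ℝ → ℝ} (hφ : ∀ s t, 0 ≤ s → s ≤ t → φ s ≤ φ t)
    (hφ₀ : ∀ t, 0 < t → 0 < φ t) {g W : ℕ → ℝ} (hg : ∀ n, 0 ≤ g n) (hle : ∀ n, φ (g n) ≤ W n)
    (hW : Tendsto W atTop (𝓝 0)) : Tendsto g atTop (𝓝 0) := by
  refine Metric.tendsto_atTop.2 fun δ hδ => ?_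
  obtain ⟨N, hN⟩ := eventually_atTop.1 (hW.eventually_lt_const (hφ₀ δ hδ))
  refine ⟨N, fun n hn => ?_⟩
  rw [Real.dist_eq, sub_zero, abs_of_nonneg (hg n)]
  by_contra! hδn
  exact (hN n hn).not_ge ((hφ δ (g n) hδ.le hδn).trans (hle n))

theorem norm_smul_apply_le {E F : Type*} [SeminormedAddCommGroup E] [NormedSpace ℝ E]
    [SeminormedAddCommGroup F] [NormedSpace ℝ F] (T : E →L[ℝ] F) {γ c : ℝ} (hγ : 0 ≤ γ)
    (h : γ * ‖T‖ ≤ c) (u : E) : ‖γ • T u‖ ≤ c * ‖u‖ := by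
  rw [norm_smul, Real.norm_of_nonneg hγ]
  calc γ * ‖T u‖ ≤ γ * (‖T‖ * ‖u‖) := mul_le_mul_of_nonneg_left (T.le_opNorm u) hγ
    _ = γ * ‖T‖ * ‖u‖ := (mul_assoc ..).symm
    _ ≤ c * ‖u‖ := mul_le_mul_of_nonneg_right h (norm_nonneg u)

section Operators

variable {E : Type*} [NormedAddCommGroup E] [InnerProductSpace ℝ E]

theorem MonotoneSV.inv {A : E → Set E} (hA : MonotoneSV A) :
    MonotoneSV fun w => {g | w ∈ A g} := fun x y u v hu hv => by
  rw [real_inner_comm]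
  exact hA u v x y hu hv

theorem IsResolvent.norm_sub_le {A : E → Set E} (hA : MonotoneSV A) {γ : ℝ} (hγ : 0 ≤ γ)
    {J : E → E} (hJ : IsResolvent γ A J) (w w' : E) : ‖J w - J w'‖ ≤ ‖w - w'‖ := by
  obtain ⟨u, hu, hw⟩ := hJ w
  obtain ⟨u', hu', hw'⟩ := hJ w'
  have hsplit : w - w' = (J w - J w') + γ • (u - u') := by
    linear_combination (norm := module) hw - hw'
  have hsq : ‖J w - J w'‖ ^ 2 ≤ ‖J w - J w'‖ * ‖w - w'‖ := by
    calc ‖J w - J w'‖ ^ 2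
        ≤ ‖J w - J w'‖ ^ 2 + γ * ⟪J w - J w', u - u'⟫_ℝ :=
          le_add_of_nonneg_right (mul_nonneg hγ (hA _ _ _ _ hu hu'))
      _ = ⟪J w - J w', w - w'⟫_ℝ := by
          rw [hsplit, inner_add_right, real_inner_smul_right, real_inner_self_eq_norm_sq]
      _ ≤ ‖J w - J w'‖ * ‖w - w'‖ := real_inner_le_norm _ _
  nlinarith [norm_nonneg (J w - J w'), norm_nonneg (w - w')]

theorem IsResolvent.norm_perturb_sub_le {A : E → Set E} (hA : MonotoneSV A) {γ : ℝ} (hγ : 0 ≤ γ)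
    {J : E → E} (hJ : IsResolvent γ A J) (w d b : E) :
    ‖J (w + γ • d) + b - J w‖ ≤ γ * ‖d‖ + ‖b‖ := by
  calc ‖J (w + γ • d) + b - J w‖ = ‖(J (w + γ • d) - J w) + b‖ := by rw [sub_add_eq_add_sub]
    _ ≤ ‖J (w + γ • d) - J w‖ + ‖b‖ := norm_add_le _ _
    _ ≤ ‖γ • d‖ + ‖b‖ := by
        gcongr
        simpa using hJ.norm_sub_le hA hγ (w + γ • d) w
    _ = γ * ‖d‖ + ‖b‖ := by rw [norm_smul, Real.norm_of_nonneg hγ]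

end Operators

section FBF

variable {H G : Type*} [NormedAddCommGroup H] [InnerProductSpace ℝ H] [CompleteSpace H]
  [NormedAddCommGroup G] [InnerProductSpace ℝ G] [CompleteSpace G]

/- With `e = w - w̄`, `u = w - P` and the skew `S` of the header, this is
`‖e - (u - γ S u)‖² = ‖e‖² - ‖u‖² + ‖γ S u‖² - 2 ⟪u - e, γ S e - u⟫`; the terms `⟪u, S u⟫`
cancel because `S` is skew. -/
theorem fbf_step_norm_sq_eq (L : H →L[ℝ] G) (γ : ℝ) (e₁ u₁ : H) (e₂ u₂ : G) :
    ‖e₁ - u₁ + γ • (L†) u₂‖ ^ 2 + ‖e₂ - u₂ - γ • L u₁‖ ^ 2 =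
      ‖e₁‖ ^ 2 + ‖e₂‖ ^ 2 - ‖u₁‖ ^ 2 - ‖u₂‖ ^ 2 + (‖γ • (L†) u₂‖ ^ 2 + ‖γ • L u₁‖ ^ 2)
        - 2 * (⟪u₁ - e₁, γ • (L†) e₂ - u₁⟫_ℝ + ⟪u₂ - e₂, -(γ • L e₁) - u₂⟫_ℝ) := by
  simp only [← real_inner_self_eq_norm_sq, inner_add_left, inner_add_right, inner_sub_left,
    inner_sub_right, inner_neg_right, real_inner_smul_left, real_inner_smul_right,
    ContinuousLinearMap.adjoint_inner_left, ContinuousLinearMap.adjoint_inner_right,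
    real_inner_comm e₁ u₁, real_inner_comm e₂ u₂, real_inner_comm (L u₁) e₂,
    real_inner_comm (L e₁) u₂, real_inner_comm (L u₁) u₂, real_inner_comm e₂ (L e₁), map_smul]
  ring

theorem fbf_exact_step_fejer {A : H → Set H} {B : G → Set G} (hA : MonotoneSV A)
    (hB : MonotoneSV B) {L : H →L[ℝ] G} {z xb x P₁ uA : H} {r vb v P₂ uB : G} {γ ε : ℝ}
    (hkt₁ : z - (L†) vb ∈ A xb) (hkt₂ : vb ∈ B (L xb - r)) (hε : 0 < ε) (hεγ : ε ≤ γ)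
    (hγL : γ * ‖L‖ ≤ 1 - ε) (huA : uA ∈ A P₁) (hP₁ : x - γ • (L†) v + γ • z = P₁ + γ • uA)
    (huB : P₂ ∈ B uB) (hP₂ : v + γ • L x - γ • r = P₂ + γ • uB) :
    ‖P₁ + γ • (L†) (v - P₂) - xb‖ ^ 2 + ‖P₂ - γ • L (x - P₁) - vb‖ ^ 2
        + ε * (‖v - P₂‖ ^ 2 + ⟪vb - P₂, (L xb - r) - uB⟫_ℝ)
      ≤ ‖x - xb‖ ^ 2 + ‖v - vb‖ ^ 2 := by
  have hγ : 0 ≤ γ := hε.le.trans hεγ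
  have hgap₁ : ⟪(x - P₁) - (x - xb), γ • (L†) (v - vb) - (x - P₁)⟫_ℝ
      = γ * ⟪xb - P₁, (z - (L†) vb) - uA⟫_ℝ := by
    rw [← real_inner_smul_right]
    congr 1
    · abel
    · rw [map_sub]
      linear_combination (norm := module) -hP₁
  have hgap₂ : ⟪(v - P₂) - (v - vb), -(γ • L (x - xb)) - (v - P₂)⟫_ℝ
      = γ * ⟪vb - P₂, (L xb - r) - uB⟫_ℝ := by
    rw [← real_inner_smul_right]
    congr 1
    · abel
    · rw [map_sub]
      linear_combination (norm := module) -hP₂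
  have hmono₁ : 0 ≤ ⟪xb - P₁, (z - (L†) vb) - uA⟫_ℝ := hA _ _ _ _ hkt₁ huA
  have hmono₂ : 0 ≤ ⟪vb - P₂, (L xb - r) - uB⟫_ℝ := by
    rw [real_inner_comm]; exact hB _ _ _ _ hkt₂ huB
  have hL₁ : ‖γ • L (x - P₁)‖ ^ 2 ≤ (1 - ε) ^ 2 * ‖x - P₁‖ ^ 2 := by
    rw [← mul_pow]
    exact pow_le_pow_left₀ (norm_nonneg _) (norm_smul_apply_le L hγ hγL _) 2
  have hL₂ : ‖γ • (L†) (v - P₂)‖ ^ 2 ≤ (1 - ε) ^ 2 * ‖v - P₂‖ ^ 2 := by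
    rw [← mul_pow]
    refine pow_le_pow_left₀ (norm_nonneg _) (norm_smul_apply_le (L†) hγ ?_ _) 2
    rwa [LinearIsometryEquiv.norm_map]
  have hε₁ : (1 - ε) ^ 2 ≤ 1 - ε := by nlinarith [mul_nonneg hγ (norm_nonneg L)]
  have hsq := fbf_step_norm_sq_eq L γ (x - xb) (x - P₁) (v - vb) (v - P₂)
  rw [hgap₁, hgap₂] at hsq
  have e₁ : P₁ + γ • (L†) (v - P₂) - xb = (x - xb) - (x - P₁) + γ • (L†) (v - P₂) := by abel
  have e₂ : P₂ - γ • L (x - P₁) - vb = (v - vb) - (v - P₂) - γ • L (x - P₁) := by abel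
  rw [e₁, e₂, hsq]
  nlinarith [mul_le_mul_of_nonneg_right hε₁ (sq_nonneg ‖x - P₁‖),
    mul_le_mul_of_nonneg_right hε₁ (sq_nonneg ‖v - P₂‖), mul_nonneg hγ hmono₁,
    mul_le_mul_of_nonneg_right hεγ hmono₂]

theorem fbf_resolvent_error {A : H → Set H} {B : G → Set G} (hA : MonotoneSV A)
    (hB : MonotoneSV B) {L : H →L[ℝ] G} {γ : ℝ} (hγ : 0 ≤ γ) {JA : H → H} {JB : G → G}
    (hJA : IsResolvent γ A JA) (hJB : IsResolvent γ (fun w => {g : G | w ∈ B g}) JB)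
    {x y₁ p₁ a₁ b₁ z : H} {v y₂ p₂ a₂ b₂ r : G}
    (hy₁ : y₁ = x - γ • ((L†) v + a₁)) (hy₂ : y₂ = v + γ • (L x + a₂))
    (hp₁ : p₁ = JA (y₁ + γ • z) + b₁) (hp₂ : p₂ = JB (y₂ - γ • r) + b₂) :
    ‖p₁ - JA (x - γ • (L†) v + γ • z)‖ ≤ γ * ‖a₁‖ + ‖b₁‖ ∧
      ‖p₂ - JB (v + γ • L x - γ • r)‖ ≤ γ * ‖a₂‖ + ‖b₂‖ := by
  have h₁ : y₁ + γ • z = (x - γ • (L†) v + γ • z) + γ • (-a₁) := by rw [hy₁]; module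
  have h₂ : y₂ - γ • r = (v + γ • L x - γ • r) + γ • a₂ := by rw [hy₂]; module
  constructor
  · rw [hp₁, h₁, ← norm_neg a₁]
    exact hJA.norm_perturb_sub_le hA hγ _ _ _
  · rw [hp₂, h₂]
    exact hJB.norm_perturb_sub_le hB.inv hγ _ _ _

theorem fbf_step_error {A : H → Set H} {B : G → Set G} (hA : MonotoneSV A)
    (hB : MonotoneSV B) {L : H →L[ℝ] G} {γ : ℝ} (hγ : 0 ≤ γ) (hγL : γ * ‖L‖ ≤ 1)
    {JA : H → H} {JB : G → G}
    (hJA : IsResolvent γ A JA) (hJB : IsResolvent γ (fun w => {g : G | w ∈ B g}) JB)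
    {x y₁ p₁ q₁ a₁ b₁ c₁ z : H} {v y₂ p₂ q₂ a₂ b₂ c₂ r : G}
    (hy₁ : y₁ = x - γ • ((L†) v + a₁)) (hy₂ : y₂ = v + γ • (L x + a₂))
    (hp₁ : p₁ = JA (y₁ + γ • z) + b₁) (hp₂ : p₂ = JB (y₂ - γ • r) + b₂)
    (hq₁ : q₁ = p₁ - γ • ((L†) p₂ + c₁)) (hq₂ : q₂ = p₂ + γ • (L p₁ + c₂)) :
    ‖x - y₁ + q₁ - (JA (x - γ • (L†) v + γ • z)
          + γ • (L†) (v - JB (v + γ • L x - γ • r)))‖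
        + ‖v - y₂ + q₂ - (JB (v + γ • L x - γ • r)
          - γ • L (x - JA (x - γ • (L†) v + γ • z)))‖
      ≤ γ * (3 * (‖a₁‖ + ‖a₂‖) + ‖c₁‖ + ‖c₂‖) + 2 * (‖b₁‖ + ‖b₂‖) := by
  set P₁ := JA (x - γ • (L†) v + γ • z)
  set P₂ := JB (v + γ • L x - γ • r)
  obtain ⟨hP₁, hP₂⟩ := fbf_resolvent_error hA hB hγ hJA hJB hy₁ hy₂ hp₁ hp₂
  have hL₁ : ‖γ • L (p₁ - P₁)‖ ≤ ‖p₁ - P₁‖ := by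
    simpa only [one_mul] using norm_smul_apply_le L hγ hγL (p₁ - P₁)
  have hL₂ : ‖γ • (L†) (p₂ - P₂)‖ ≤ ‖p₂ - P₂‖ := by
    simpa only [one_mul] using norm_smul_apply_le (L†) hγ (c := 1)
      (by rwa [LinearIsometryEquiv.norm_map]) (p₂ - P₂)
  have e₁ : x - y₁ + q₁ - (P₁ + γ • (L†) (v - P₂))
      = γ • a₁ + (p₁ - P₁) - γ • (L†) (p₂ - P₂) - γ • c₁ := by
    rw [hy₁, hq₁]; simp only [map_sub]; module
  have e₂ : v - y₂ + q₂ - (P₂ - γ • L (x - P₁))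
      = -(γ • a₂) + (p₂ - P₂) + γ • L (p₁ - P₁) + γ • c₂ := by
    rw [hy₂, hq₂]; simp only [map_sub]; module
  rw [e₁, e₂]
  have n₁ := norm_sub_le (γ • a₁ + (p₁ - P₁) - γ • (L†) (p₂ - P₂)) (γ • c₁)
  have n₂ := norm_sub_le (γ • a₁ + (p₁ - P₁)) (γ • (L†) (p₂ - P₂))
  have n₃ := norm_add_le (γ • a₁) (p₁ - P₁)
  have n₄ := norm_add_le (-(γ • a₂) + (p₂ - P₂) + γ • L (p₁ - P₁)) (γ • c₂)
  have n₅ := norm_add_le (-(γ • a₂) + (p₂ - P₂)) (γ • L (p₁ - P₁))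
  have n₆ := norm_add_le (-(γ • a₂)) (p₂ - P₂)
  simp only [norm_neg, norm_smul, Real.norm_of_nonneg hγ] at n₁ n₃ n₄ n₆
  linarith

end FBF

theorem stmt_15_general {H G : Type*} [NormedAddCommGroup H] [InnerProductSpace ℝ H] [CompleteSpace H]
    [NormedAddCommGroup G] [InnerProductSpace ℝ G] [CompleteSpace G]
    (A : H → Set H) (hA : MaxMonotone A)
    (B : G → Set G) (hB : MaxMonotone B)
    (L : H →L[ℝ] G) (z : H) (r : G)
    (a₁ b₁ c₁ : ℕ → H) (a₂ b₂ c₂ : ℕ → G)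
    (ha₁ : Summable fun n => ‖a₁ n‖) (hb₁ : Summable fun n => ‖b₁ n‖)
    (hc₁ : Summable fun n => ‖c₁ n‖)
    (ha₂ : Summable fun n => ‖a₂ n‖) (hb₂ : Summable fun n => ‖b₂ n‖)
    (hc₂ : Summable fun n => ‖c₂ n‖)
    (ε : ℝ) (hε : ε ∈ Set.Ioo (0:ℝ) (1 / (‖L‖ + 1)))
    (γ : ℕ → ℝ) (hγ : ∀ n, γ n ∈ Set.Icc ε ((1 - ε) / ‖L‖))
    (JA : ℕ → H → H) (hJA : ∀ n, IsResolvent (γ n) A (JA n))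
    (JB : ℕ → G → G) (hJB : ∀ n, IsResolvent (γ n) (fun w => {g : G | w ∈ B g}) (JB n))
    (x y₁ p₁ q₁ : ℕ → H) (v y₂ p₂ q₂ : ℕ → G)
    (hy₁ : ∀ n, y₁ n = x n - γ n • (ContinuousLinearMap.adjoint L (v n) + a₁ n))
    (hy₂ : ∀ n, y₂ n = v n + γ n • (L (x n) + a₂ n))
    (hp₁ : ∀ n, p₁ n = JA n (y₁ n + γ n • z) + b₁ n)
    (hp₂ : ∀ n, p₂ n = JB n (y₂ n - γ n • r) + b₂ n)
    (hq₁ : ∀ n, q₁ n = p₁ n - γ n • (ContinuousLinearMap.adjoint L (p₂ n) + c₁ n))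
    (hq₂ : ∀ n, q₂ n = p₂ n + γ n • (L (p₁ n) + c₂ n))
    (hx : ∀ n, x (n + 1) = x n - y₁ n + q₁ n)
    (hv : ∀ n, v (n + 1) = v n - y₂ n + q₂ n)
    (xb : H) (vb : G)
    (hkt₁ : z - ContinuousLinearMap.adjoint L vb ∈ A xb)
    (hkt₂ : vb ∈ B (L xb - r))
    (hunif : UnifMonoAt (fun w => {g : G | w ∈ B g}) vb) :
    Filter.Tendsto v Filter.atTop (nhds vb) ∧
      Filter.Tendsto p₂ Filter.atTop (nhds vb) := by
  obtain ⟨φ, hφmono, -, hφpos, hφ⟩ := hunif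
  have hε₁ : ε ≤ 1 :=
    hε.2.le.trans (div_le_one_of_le₀ (by linarith [norm_nonneg L]) (by positivity))
  have hγ₀ : ∀ n, 0 ≤ γ n := fun n => hε.1.le.trans (hγ n).1
  have hγL : ∀ n, γ n * ‖L‖ ≤ 1 - ε := fun n =>
    mul_le_of_le_div₀ (sub_nonneg.2 hε₁) (norm_nonneg L) (hγ n).2
  set P₂ : ℕ → G := fun n => JB n (v n + γ n • L (x n) - γ n • r)
  choose uA huA hP₁ using fun n => hJA n (x n - γ n • (L†) (v n) + γ n • z)
  choose uB huB hP₂ using fun n => hJB n (v n + γ n • L (x n) - γ n • r)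
  set gap : ℕ → ℝ := fun n => ⟪vb - P₂ n, (L xb - r) - uB n⟫_ℝ
  have hgap₀ : ∀ n, 0 ≤ gap n := fun n =>
    (hB.1 _ _ _ _ hkt₂ (huB n)).trans_eq (real_inner_comm _ _)
  have hsum : Summable fun n => ε * (‖v n - P₂ n‖ ^ 2 + gap n) := by
    refine summable_of_norm_sq_add_norm_sq_add_le
      (fun n => mul_nonneg hε.1.le (add_nonneg (sq_nonneg _) (hgap₀ n)))
      (fun n => fbf_exact_step_fejer hA.1 hB.1 hkt₁ hkt₂ hε.1 (hγ n).1 (hγL n) (huA n) (hP₁ n)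
        (huB n) (hP₂ n)) ?_
    refine Summable.of_nonneg_of_le (fun n => by positivity) (fun n => ?_)
      (((((ha₁.add ha₂).mul_left 3).add hc₁).add hc₂).mul_left ((1 - ε) / ‖L‖) |>.add
        ((hb₁.add hb₂).mul_left 2))
    rw [hx n, hv n]
    refine (fbf_step_error hA.1 hB.1 (hγ₀ n) (by linarith [hγL n, hε.1]) (hJA n) (hJB n) (hy₁ n)
      (hy₂ n) (hp₁ n) (hp₂ n) (hq₁ n) (hq₂ n)).trans ?_
    gcongr
    exact (hγ n).2
  have hU := ((summable_mul_left_iff hε.1.ne').1 hsum).tendsto_atTop_zero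
  have hvP : Tendsto (fun n => ‖v n - P₂ n‖) atTop (𝓝 0) :=
    tendsto_zero_of_modulus_le (φ := fun t => t ^ 2) (fun s t hs hst => pow_le_pow_left₀ hs hst 2)
      (fun t ht => pow_pos ht 2) (fun n => norm_nonneg _)
      (fun n => le_add_of_nonneg_right (hgap₀ n)) hU
  have hP : Tendsto P₂ atTop (𝓝 vb) := by
    refine tendsto_iff_norm_sub_tendsto_zero.2 (tendsto_zero_of_modulus_le hφmono hφpos
      (fun n => norm_nonneg _) (fun n => ?_) hU)
    rw [norm_sub_rev]
    exact (hφ _ hkt₂ _ _ (huB n)).trans (le_add_of_nonneg_left (sq_nonneg _))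
  have hpP : Tendsto (fun n => ‖p₂ n - P₂ n‖) atTop (𝓝 0) := by
    have hbound := (ha₂.tendsto_atTop_zero.const_mul ((1 - ε) / ‖L‖)).add hb₂.tendsto_atTop_zero
    rw [mul_zero, add_zero] at hbound
    refine squeeze_zero (fun n => norm_nonneg _) (fun n => ?_) hbound
    refine ((fbf_resolvent_error hA.1 hB.1 (hγ₀ n) (hJA n) (hJB n) (hy₁ n) (hy₂ n) (hp₁ n)
      (hp₂ n)).2).trans ?_
    gcongr
    exact (hγ n).2
  constructor
  · simpa using (tendsto_zero_iff_norm_tendsto_zero.2 hvP).add hP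
  · simpa using (tendsto_zero_iff_norm_tendsto_zero.2 hpP).add hP

theorem stmt_15 {H G : Type*} [NormedAddCommGroup H] [InnerProductSpace ℝ H] [CompleteSpace H]
    [NormedAddCommGroup G] [InnerProductSpace ℝ G] [CompleteSpace G]
    (A : H → Set H) (hA : MaxMonotone A)
    (B : G → Set G) (hB : MaxMonotone B)
    (L : H →L[ℝ] G) (hL : L ≠ 0) (z : H) (r : G)
    (hran : ∃ x : H, ∃ u ∈ A x, ∃ w ∈ B (L x - r),
      z = u + ContinuousLinearMap.adjoint L w)
    (a₁ b₁ c₁ : ℕ → H) (a₂ b₂ c₂ : ℕ → G)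
    (ha₁ : Summable fun n => ‖a₁ n‖) (hb₁ : Summable fun n => ‖b₁ n‖)
    (hc₁ : Summable fun n => ‖c₁ n‖)
    (ha₂ : Summable fun n => ‖a₂ n‖) (hb₂ : Summable fun n => ‖b₂ n‖)
    (hc₂ : Summable fun n => ‖c₂ n‖)
    (ε : ℝ) (hε : ε ∈ Set.Ioo (0:ℝ) (1 / (‖L‖ + 1)))
    (γ : ℕ → ℝ) (hγ : ∀ n, γ n ∈ Set.Icc ε ((1 - ε) / ‖L‖))
    (JA : ℕ → H → H) (hJA : ∀ n, IsResolvent (γ n) A (JA n))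
    (JB : ℕ → G → G) (hJB : ∀ n, IsResolvent (γ n) (fun w => {g : G | w ∈ B g}) (JB n))
    (x y₁ p₁ q₁ : ℕ → H) (v y₂ p₂ q₂ : ℕ → G)
    (hy₁ : ∀ n, y₁ n = x n - γ n • (ContinuousLinearMap.adjoint L (v n) + a₁ n))
    (hy₂ : ∀ n, y₂ n = v n + γ n • (L (x n) + a₂ n))
    (hp₁ : ∀ n, p₁ n = JA n (y₁ n + γ n • z) + b₁ n)
    (hp₂ : ∀ n, p₂ n = JB n (y₂ n - γ n • r) + b₂ n)
    (hq₁ : ∀ n, q₁ n = p₁ n - γ n • (ContinuousLinearMap.adjoint L (p₂ n) + c₁ n))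
    (hq₂ : ∀ n, q₂ n = p₂ n + γ n • (L (p₁ n) + c₂ n))
    (hx : ∀ n, x (n + 1) = x n - y₁ n + q₁ n)
    (hv : ∀ n, v (n + 1) = v n - y₂ n + q₂ n)
    (xb : H) (vb : G)
    (hxweak : WeakTendsto x xb) (hvweak : WeakTendsto v vb)
    (hprimal : ∃ u ∈ A xb, ∃ w ∈ B (L xb - r), z = u + ContinuousLinearMap.adjoint L w)
    (hdual : ∃ s : H, z - ContinuousLinearMap.adjoint L vb ∈ A s ∧
      ∃ g : G, vb ∈ B g ∧ -r = -(L s) + g)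
    (hkt₁ : z - ContinuousLinearMap.adjoint L vb ∈ A xb)
    (hkt₂ : vb ∈ B (L xb - r))
    (hunif : UnifMonoAt (fun w => {g : G | w ∈ B g}) vb) :
    Filter.Tendsto v Filter.atTop (nhds vb) ∧
      Filter.Tendsto p₂ Filter.atTop (nhds vb) :=
  stmt_15_general A hA B hB L z r a₁ b₁ c₁ a₂ b₂ c₂ ha₁ hb₁ hc₁ ha₂ hb₂ hc₂ ε hε γ hγ JA hJA JB hJB
    x y₁ p₁ q₁ v y₂ p₂ q₂ hy₁ hy₂ hp₁ hp₂ hq₁ hq₂ hx hv xb vb hkt₁ hkt₂ hunif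
end
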